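/- arXiv:1008.1443 — 8 statements merged into one kernel-verified Lean document; each statement's English description precedes it below -/
import Mathlib

section
/- Let f ∈ Inj(Ω) be any injective map. Then there is a one-to-one correspondence between the elements of Ω \ f(Ω) and the forward cycles in the cycle decomposition of f. -/
open Cardinal Function Set

universe u
variable {Ω : Type u}

/-- Right-order composition: `rcomp f g` applies `f` first, then `g`
(this is the product `fg` when maps are written on the right of their arguments). -/
def rcomp (f g : Ω → Ω) : Ω → Ω := g ∘ f

/-- Conjugation `a f a⁻¹` in right-operator notation: apply `a`, then `f`, then `a⁻¹`. -/
def conjBy (a : Equiv.Perm Ω) (f : Ω → Ω) : Ω → Ω := ⇑a.symm ∘ f ∘ ⇑a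

/-- `s` is a cycle under `f`: it is nonempty, `f α ∈ s ↔ α ∈ s` for all `α`, and no proper
nonempty subset of `s` has this property. -/
def IsCycleUnder (f : Ω → Ω) (s : Set Ω) : Prop :=
  s.Nonempty ∧ (∀ α, f α ∈ s ↔ α ∈ s) ∧
    ∀ t ⊆ s, t.Nonempty → (∀ α, f α ∈ t ↔ α ∈ t) → t = s

/-- A forward cycle: an infinite cycle meeting the complement of the range of `f`. -/
def IsForwardCycle (f : Ω → Ω) (s : Set Ω) : Prop :=
  IsCycleUnder f s ∧ s.Infinite ∧ (s \ Set.range f).Nonempty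

/-- An open cycle: an infinite cycle that is not a forward cycle. -/
def IsOpenCycle (f : Ω → Ω) (s : Set Ω) : Prop :=
  IsCycleUnder f s ∧ s.Infinite ∧ ¬(s \ Set.range f).Nonempty

/-- `f` and `g` have equivalent cycle decompositions: there is a bijection between their
cycles preserving cardinality and forwardness. -/
def EquivCycleDecomp (f g : Ω → Ω) : Prop :=
  ∃ e : {s : Set Ω // IsCycleUnder f s} ≃ {s : Set Ω // IsCycleUnder g s},
    ∀ s : {s : Set Ω // IsCycleUnder f s},
      Cardinal.mk ↥s.1 = Cardinal.mk ↥(e s).1 ∧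
      (IsForwardCycle f s.1 ↔ IsForwardCycle g (e s).1)

/-- `|Ω \ (Ω)f|`, the cardinality of the complement of the image of `f`. -/
noncomputable def coim (f : Ω → Ω) : Cardinal := Cardinal.mk ↥(Set.range f)ᶜ

/-- `(f)C_n`: the number of cycles under `f` of cardinality `n`. -/
noncomputable def Cn (f : Ω → Ω) (n : ℕ) : Cardinal :=
  Cardinal.mk {s : Set Ω // IsCycleUnder f s ∧ Cardinal.mk ↥s = n}

/-- `(f)C_open`: the number of open cycles under `f`. -/
noncomputable def Copen (f : Ω → Ω) : Cardinal :=
  Cardinal.mk {s : Set Ω // IsOpenCycle f s}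

/-- `(f)C_fwd`: the number of forward cycles under `f`. -/
noncomputable def Cfwd (f : Ω → Ω) : Cardinal :=
  Cardinal.mk {s : Set Ω // IsForwardCycle f s}

/-- `f ≈_fin g`. -/
def FinEquiv (f g : Ω → Ω) : Prop :=
  Copen f = Copen g ∧ Cfwd f = Cfwd g ∧
  {n : ℕ | 0 < n ∧ Cn f n ≠ Cn g n}.Finite ∧
  ∀ n : ℕ, 0 < n → Cn f n ≠ Cn g n → Cn f n < ℵ₀ ∧ Cn g n < ℵ₀

/-- `Σ_{n ∈ ℤ₊} ((f)C_n − (g)C_n)`, with a term taken to be `0` when `(f)C_n = (g)C_n`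
(in particular when both are the same infinite cardinal). -/
noncomputable def diffSum (f g : Ω → Ω) : ℤ :=
  ∑ᶠ n : ℕ, if 0 < n then (((Cn f n).toNat : ℤ) - ((Cn g n).toNat : ℤ)) else 0

/-- `f ≈_even g`. -/
def EvenEquiv (f g : Ω → Ω) : Prop := FinEquiv f g ∧ Even (diffSum f g)

/-- A permutation is finitary if it has finite support. -/
def Finitary (h : Equiv.Perm Ω) : Prop := {x | h x ≠ x}.Finite

/-- A transposition: interchanges two points and fixes all others. -/
def IsTransposition (h : Equiv.Perm Ω) : Prop :=
  ∃ x y, x ≠ y ∧ h x = y ∧ h y = x ∧ ∀ z, z ≠ x → z ≠ y → h z = z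

/-- An even finitary permutation: a product of an even number of transpositions. -/
def IsAlt (h : Equiv.Perm Ω) : Prop :=
  ∃ l : List (Equiv.Perm Ω), (∀ τ ∈ l, IsTransposition τ) ∧ l.prod = h ∧ Even l.length

/-- `Sym(Ω)` as a set of maps `Ω → Ω`. -/
def symSet (Ω : Type u) : Set (Ω → Ω) := {f | Function.Bijective f}

/-- `Fin(Ω)` as a set of maps `Ω → Ω`. -/
def finSet (Ω : Type u) : Set (Ω → Ω) := {f | ∃ h : Equiv.Perm Ω, Finitary h ∧ f = ⇑h}

/-- `Alt(Ω)` as a set of maps `Ω → Ω`. -/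
def altSet (Ω : Type u) : Set (Ω → Ω) := {f | ∃ h : Equiv.Perm Ω, IsAlt h ∧ f = ⇑h}

/-- `Inj_fin(Ω) = {f : 1 ≤ |Ω \ (Ω)f| < ℵ₀}`. -/
def injFinSet (Ω : Type u) : Set (Ω → Ω) :=
  {f | Function.Injective f ∧ 1 ≤ coim f ∧ coim f < ℵ₀}

/-- `Inj_∞(Ω) = {f : |Ω \ (Ω)f| = ℵ₀}`. -/
def injInfSet (Ω : Type u) : Set (Ω → Ω) := {f | Function.Injective f ∧ coim f = ℵ₀}

/-- `M` is a submonoid of `Inj(Ω)`: all its members are injective, it contains the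
identity, and it is closed under composition. -/
def IsSubmonoidOfInj (M : Set (Ω → Ω)) : Prop :=
  (∀ f ∈ M, Function.Injective f) ∧ id ∈ M ∧ ∀ f ∈ M, ∀ g ∈ M, rcomp f g ∈ M

/-- `M` is normal: closed under conjugation by permutations of `Ω`. -/
def IsNormalSet (M : Set (Ω → Ω)) : Prop :=
  ∀ f ∈ M, ∀ a : Equiv.Perm Ω, conjBy a f ∈ M

/-- `M_ℕ = {|Ω \ (Ω)f| : f ∈ M} ∩ ℕ`. -/
def MN (M : Set (Ω → Ω)) : Set ℕ := {n | ∃ f ∈ M, coim f = n}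

/-- `S(N) = {f ∈ Inj(Ω) : |Ω \ (Ω)f| ∈ N \ {0}}`. -/
def SN (Ω : Type u) (N : Set ℕ) : Set (Ω → Ω) :=
  {f | Function.Injective f ∧ ∃ n ∈ N, n ≠ 0 ∧ coim f = n}

/-- `{f ∈ Inj(Ω) : |Ω \ (Ω)f| ∈ N \ (G ∪ {0})}`. -/
def SNdiff (Ω : Type u) (N : AddSubmonoid ℕ) (G : Set ℕ) : Set (Ω → Ω) :=
  {f | Function.Injective f ∧ ∃ n : ℕ, n ∈ N ∧ n ∉ G ∧ n ≠ 0 ∧ coim f = n}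

/-- `G` is the (unique) minimal generating set of the additive submonoid `N ⊆ ℕ`:
it generates `N` and is contained in every generating set of `N`. -/
def IsMinGenSet (N : AddSubmonoid ℕ) (G : Set ℕ) : Prop :=
  AddSubmonoid.closure G = N ∧ ∀ G' : Set ℕ, AddSubmonoid.closure G' = N → G ⊆ G'

/-- `B` is `≈_fin`-closed. -/
def FinEquivClosed (B : Set (Ω → Ω)) : Prop :=
  ∀ f g : Ω → Ω, Function.Injective f → Function.Injective g →
    FinEquiv f g → (f ∈ B ↔ g ∈ B)

/-- `B` is `≈_even`-closed. -/
def EvenEquivClosed (B : Set (Ω → Ω)) : Prop :=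
  ∀ f g : Ω → Ω, Function.Injective f → Function.Injective g →
    EvenEquiv f g → (f ∈ B ↔ g ∈ B)

/-- The cycle under `f` containing `α`. -/
def cyc (f : Ω → Ω) (α : Ω) : Set Ω := {β | ∃ m n : ℕ, f^[m] α = f^[n] β}

lemma mem_cyc_self (f : Ω → Ω) (α : Ω) : α ∈ cyc f α := ⟨0, 0, rfl⟩

lemma cyc_sat (f : Ω → Ω) (α : Ω) : ∀ β, f β ∈ cyc f α ↔ β ∈ cyc f α := by
  intro β
  constructor
  · rintro ⟨m, n, h⟩
    exact ⟨m, n + 1, by rwa [Function.iterate_succ_apply]⟩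
  · rintro ⟨m, n, h⟩
    refine ⟨m + 1, n, ?_⟩
    rw [Function.iterate_succ_apply', h]
    exact (Function.iterate_succ_apply' f n β).symm.trans (Function.iterate_succ_apply f n β)

lemma sat_iterate {f : Ω → Ω} {t : Set Ω} (ht : ∀ α, f α ∈ t ↔ α ∈ t) :
    ∀ n x, f^[n] x ∈ t ↔ x ∈ t := by
  intro n
  induction n with
  | zero => intro x; rfl
  | succ n ih =>
      intro x
      rw [Function.iterate_succ_apply]
      exact (ih (f x)).trans (ht x)

lemma cyc_symm {f : Ω → Ω} {α β : Ω} (h : β ∈ cyc f α) : α ∈ cyc f β := by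
  obtain ⟨m, n, h⟩ := h; exact ⟨n, m, h.symm⟩

lemma cyc_trans {f : Ω → Ω} {α β γ : Ω} (h1 : β ∈ cyc f α) (h2 : γ ∈ cyc f β) :
    γ ∈ cyc f α := by
  obtain ⟨m, n, h1⟩ := h1
  obtain ⟨p, q, h2⟩ := h2
  refine ⟨p + m, n + q, ?_⟩
  rw [Function.iterate_add_apply, h1, ← Function.iterate_add_apply,
    Nat.add_comm p n, Function.iterate_add_apply, h2, ← Function.iterate_add_apply]

lemma cyc_isCycle (f : Ω → Ω) (α : Ω) : IsCycleUnder f (cyc f α) := by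
  refine ⟨⟨α, mem_cyc_self f α⟩, cyc_sat f α, ?_⟩
  intro t hts ⟨β0, hβ0⟩ hsat
  apply Set.Subset.antisymm hts
  intro γ hγ
  have hβγ : γ ∈ cyc f β0 := cyc_trans (cyc_symm (hts hβ0)) hγ
  obtain ⟨m, n, h⟩ := hβγ
  have : f^[m] β0 ∈ t := (sat_iterate hsat m β0).2 hβ0
  rw [h] at this
  exact (sat_iterate hsat n γ).1 this

lemma cycle_eq_cyc {f : Ω → Ω} {s : Set Ω} (hs : IsCycleUnder f s) {α : Ω}
    (hα : α ∈ s) : s = cyc f α := by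
  obtain ⟨-, hsat, hmin⟩ := hs
  refine (hmin (cyc f α) ?_ ⟨α, mem_cyc_self f α⟩ (cyc_sat f α)).symm
  rintro β ⟨m, n, h⟩
  have : f^[m] α ∈ s := (sat_iterate hsat m α).2 hα
  rw [h] at this
  exact (sat_iterate hsat n β).1 this

lemma nonrange_unique {f : Ω → Ω} (hf : Function.Injective f) :
    ∀ (m n : ℕ) (x y : Ω), x ∉ Set.range f → y ∉ Set.range f →
      f^[m] x = f^[n] y → x = y := by
  intro m
  induction m with
  | zero =>
      intro n x y hx _hy h
      cases n with
      | zero => exact h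
      | succ n =>
          exact absurd ⟨f^[n] y,
            ((Function.iterate_succ_apply' f n y).symm.trans h.symm)⟩ hx
  | succ m ih =>
      intro n x y hx hy h
      cases n with
      | zero =>
          exact absurd ⟨f^[m] x,
            ((Function.iterate_succ_apply' f m x).symm.trans h)⟩ hy
      | succ n =>
          rw [Function.iterate_succ_apply', Function.iterate_succ_apply'] at h
          exact ih n x y hx hy (hf h)

lemma cyc_infinite {f : Ω → Ω} (hf : Function.Injective f) {x : Ω}
    (hx : x ∉ Set.range f) : (cyc f x).Infinite := by
  have key : ∀ a b : ℕ, a ≤ b → f^[a] x = f^[b] x → a = b := by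
    intro a b hab h
    obtain ⟨k, rfl⟩ := Nat.le.dest hab
    rw [Function.iterate_add_apply] at h
    have hk : x = f^[k] x := hf.iterate a h
    cases k with
    | zero => simp
    | succ k =>
        rw [Function.iterate_succ_apply'] at hk
        exact absurd ⟨f^[k] x, hk.symm⟩ hx
  refine Set.infinite_of_injective_forall_mem (f := fun n : ℕ => f^[n] x) ?_ ?_
  · intro m n h
    dsimp at h
    rcases le_total m n with hmn | hmn
    · exact key m n hmn h
    · exact (key n m hmn h.symm).symm
  · intro n
    exact ⟨n, 0, rfl⟩

theorem stmt_1 [Countable Ω] [Infinite Ω] (f : Ω → Ω) (hf : Function.Injective f) :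
    Nonempty (↥(Set.range f)ᶜ ≃ {s : Set Ω // IsForwardCycle f s}) := by
  refine ⟨Equiv.ofBijective
    (fun x => ⟨cyc f x.1, cyc_isCycle f x.1, cyc_infinite hf x.2,
      ⟨x.1, mem_cyc_self f x.1, x.2⟩⟩) ⟨?_, ?_⟩⟩
  · intro x y h
    have hxy : (y : Ω) ∈ cyc f x.1 := by
      have := congrArg Subtype.val h
      dsimp at this
      rw [this]; exact mem_cyc_self f y.1
    obtain ⟨m, n, hmn⟩ := hxy
    exact Subtype.ext (nonrange_unique hf m n x.1 y.1 x.2 y.2 hmn)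
  · rintro ⟨s, hs, _hinf, ⟨x, hxs, hx⟩⟩
    refine ⟨⟨x, hx⟩, ?_⟩
    exact Subtype.ext (cycle_eq_cyc hs hxs).symm
end

section
/- Let M ⊆ Inj(Ω) be a submonoid that is closed under conjugation by elements of Sym(Ω). Then M ∩ Sym(Ω) is a normal subgroup of Sym(Ω); in particular, M ∩ Sym(Ω) is closed under taking inverses. -/
open Cardinal Function Set

universe u
variable {Ω : Type u}

theorem exists_conj_inv (a : Equiv.Perm Ω) :
    ∃ σ : Equiv.Perm Ω, conjBy σ ⇑a = ⇑a⁻¹ := by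
  classical
  let S : Setoid Ω :=
    { r := fun x y => ∃ k : ℤ, (a ^ k) x = y
      iseqv := by
        refine ⟨fun x => ⟨0, rfl⟩, ?_, ?_⟩
        · rintro x y ⟨k, rfl⟩
          exact ⟨-k, by simp [← Equiv.Perm.mul_apply, ← zpow_add]⟩
        · rintro x y z ⟨k, rfl⟩ ⟨l, rfl⟩
          exact ⟨l + k, by simp [zpow_add, Equiv.Perm.mul_apply]⟩ }
  let rep : Ω → Ω := fun x => (Quotient.mk S x).out
  have hrep : ∀ x, ∃ k : ℤ, (a ^ k) (rep x) = x := fun x => Quotient.mk_out x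
  have hrep_eq : ∀ x y, (∃ k : ℤ, (a ^ k) x = y) → rep x = rep y := by
    intro x y hxy
    simp only [rep]
    congr 1
    exact Quotient.sound hxy
  have key : ∀ r : Ω, ∀ i j : ℤ, (a ^ i) r = (a ^ j) r → (a ^ (-i)) r = (a ^ (-j)) r := by
    intro r i j hij
    have h1 : (a ^ (-i + j)) r = r := by
      have := congrArg (⇑(a ^ (-i))) hij
      simp only [← Equiv.Perm.mul_apply, ← zpow_add] at this
      simpa using this.symm
    calc (a ^ (-i)) r = (a ^ (-j)) ((a ^ (-i + j)) r) := by
          rw [← Equiv.Perm.mul_apply, ← zpow_add,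
            show -j + (-i + j) = -i by ring]
      _ = (a ^ (-j)) r := by rw [h1]
  let σf : Ω → Ω := fun x => (a ^ (-(hrep x).choose)) (rep x)
  have hσf : ∀ x, ∀ m : ℤ, (a ^ m) (rep x) = x → σf x = (a ^ (-m)) (rep x) := by
    intro x m hm
    exact key (rep x) _ m ((hrep x).choose_spec.trans hm.symm)
  have hrepσ : ∀ x, rep (σf x) = rep x := by
    intro x
    have h1 : rep (σf x) = rep (rep x) := (hrep_eq _ _ ⟨_, rfl⟩).symm
    have h2 : rep x = rep (rep x) := by
      obtain ⟨k, hk⟩ := hrep x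
      have h := congrArg (⇑(a ^ (-k))) hk
      rw [← Equiv.Perm.mul_apply, ← zpow_add, neg_add_cancel, zpow_zero,
        Equiv.Perm.one_apply] at h
      exact hrep_eq x (rep x) ⟨-k, h.symm⟩
    rw [h1, ← h2]
  have hinv : Function.Involutive σf := by
    intro x
    obtain ⟨k, hk⟩ := hrep x
    have h1 : σf x = (a ^ (-k)) (rep x) := hσf x k hk
    have h2 : σf (σf x) = (a ^ (-(-k))) (rep (σf x)) := by
      refine hσf (σf x) (-k) ?_
      rw [hrepσ, ← h1]
    rw [h2, hrepσ, neg_neg, hk]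
  have hconj : ∀ x, σf (a (σf x)) = a⁻¹ x := by
    intro x
    obtain ⟨k, hk⟩ := hrep x
    have h1 : σf x = (a ^ (-k)) (rep x) := hσf x k hk
    have hr : rep (a (σf x)) = rep x := by
      rw [show a (σf x) = (a ^ (1 : ℤ)) (σf x) by simp]
      rw [(hrep_eq _ _ ⟨1, rfl⟩).symm, hrepσ]
    have h2 : σf (a (σf x)) = (a ^ (-(-k + 1))) (rep x) := by
      have : (a ^ (-k + 1)) (rep (a (σf x))) = a (σf x) := by
        rw [hr, h1, show (-k + 1 : ℤ) = 1 + -k by ring, zpow_add,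
          Equiv.Perm.mul_apply, zpow_one]
      simpa [hr] using hσf (a (σf x)) (-k + 1) this
    rw [h2]
    have : (a ^ (-(-k + 1))) (rep x) = a⁻¹ ((a ^ k) (rep x)) := by
      rw [show a⁻¹ = a ^ (-1 : ℤ) by simp, ← Equiv.Perm.mul_apply, ← zpow_add]
      ring_nf
    rw [this, hk]
  refine ⟨hinv.toPerm, funext fun x => ?_⟩
  simp only [conjBy, Function.comp_apply, Involutive.toPerm_symm, Involutive.coe_toPerm]
  exact hconj x

theorem stmt_3 [Countable Ω] [Infinite Ω] (M : Set (Ω → Ω))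
    (hM : IsSubmonoidOfInj M) (hnorm : IsNormalSet M) :
    (∀ a : Equiv.Perm Ω, ⇑a ∈ M → ⇑a⁻¹ ∈ M) ∧
    ∃ H : Subgroup (Equiv.Perm Ω), H.Normal ∧ ∀ a : Equiv.Perm Ω, a ∈ H ↔ ⇑a ∈ M := by
  have inv_mem : ∀ a : Equiv.Perm Ω, ⇑a ∈ M → ⇑a⁻¹ ∈ M := by
    intro a ha
    obtain ⟨σ, hσ⟩ := exists_conj_inv a
    have := hnorm _ ha σ
    rwa [hσ] at this
  refine ⟨inv_mem, ?_⟩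
  let H : Subgroup (Equiv.Perm Ω) :=
    { carrier := (fun a : Equiv.Perm Ω => ⇑a) ⁻¹' M
      one_mem' := by simpa using hM.2.1
      mul_mem' := by
        intro a b ha hb
        have h := hM.2.2 _ hb _ ha
        have he : ⇑(a * b) = rcomp ⇑b ⇑a := rfl
        show ⇑(a * b) ∈ M
        rw [he]
        exact h
      inv_mem' := fun {a} ha => inv_mem a ha }
  refine ⟨H, ?_, fun a => Iff.rfl⟩
  constructor
  intro a ha b
  have h := hnorm _ ha b⁻¹
  have he : conjBy b⁻¹ ⇑a = ⇑(b * a * b⁻¹) := by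
    funext x
    simp [conjBy, Equiv.Perm.mul_apply, Equiv.Perm.inv_def]
  show ⇑(b * a * b⁻¹) ∈ M
  rwa [he] at h
end

section
/- Let M ⊆ Inj(Ω) be a submonoid that is closed under conjugation by elements of Sym(Ω). Then either M ∩ Inj_∞(Ω) = ∅ or Inj_∞(Ω) ⊆ M. -/
open Cardinal Function Set

universe u
variable {Ω : Type u}

/-- A "free" injection: every point eventually escapes the iterated range,
and the coimage is countably infinite. -/
def IsFreeInj (f : Ω → Ω) : Prop :=
  Function.Injective f ∧ (∀ x, ∃ n, x ∉ Set.range f^[n]) ∧ coim f = ℵ₀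

lemma mem_range_iterate_zero (f : Ω → Ω) (x : Ω) : x ∈ Set.range f^[0] := ⟨x, rfl⟩

lemma range_iterate_anti (f : Ω → Ω) {k m : ℕ} (h : k ≤ m) :
    Set.range f^[m] ⊆ Set.range f^[k] := by
  rintro x ⟨y, rfl⟩
  refine ⟨f^[m - k] y, ?_⟩
  rw [← Function.iterate_add_apply, Nat.add_sub_cancel' h]

lemma escapes_of_cert (f : Ω → Ω) (ℓ : Ω → ℕ) (h : ∀ x, ℓ x < ℓ (f x)) :
    ∀ x, ∃ n, x ∉ Set.range f^[n] := by
  have key : ∀ (m : ℕ) (y : Ω), m ≤ ℓ (f^[m] y) := by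
    intro m
    induction m with
    | zero => intro y; exact Nat.zero_le _
    | succ m ih =>
      intro y
      rw [Function.iterate_succ_apply']
      exact Nat.lt_of_le_of_lt (ih y) (h _)
  intro x
  refine ⟨ℓ x + 1, ?_⟩
  rintro ⟨y, hy⟩
  have := key (ℓ x + 1) y
  rw [hy] at this
  omega

lemma free_uniq {f : Ω → Ω} (hf : Function.Injective f)
    {c c' : Ω} (hc : c ∉ Set.range f) (hc' : c' ∉ Set.range f) {m m' : ℕ}
    (h : f^[m] c = f^[m'] c') : m = m' ∧ c = c' := by
  have main : ∀ (m m' : ℕ) (c c' : Ω), c ∉ Set.range f → c' ∉ Set.range f →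
      m ≤ m' → f^[m] c = f^[m'] c' → m = m' ∧ c = c' := by
    intro m m' c c' hc hc' hle he
    have hsplit : f^[m] c = f^[m] (f^[m'-m] c') := by
      rw [← Function.iterate_add_apply, Nat.add_sub_cancel' hle, he]
    have hcc : c = f^[m'-m] c' := (hf.iterate m) hsplit
    rcases Nat.eq_zero_or_pos (m' - m) with h0 | hpos
    · rw [h0] at hcc
      exact ⟨by omega, hcc⟩
    · exfalso
      obtain ⟨j, hj⟩ := Nat.exists_eq_add_of_lt hpos
      rw [hj] at hcc
      simp only [Nat.zero_add] at hcc
      exact hc ⟨f^[j] c', by rw [← Function.iterate_succ_apply' f j c', ← hcc]⟩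
  rcases le_total m m' with hle | hle
  · exact main m m' c c' hc hc' hle h
  · obtain ⟨h1, h2⟩ := main m' m c' c hc' hc hle h.symm
    exact ⟨h1.symm, h2.symm⟩

lemma free_equiv {f : Ω → Ω} (hf : IsFreeInj f) :
    ∃ E : Ω ≃ (↥(Set.range f)ᶜ × ℕ),
      (∀ (c : ↥(Set.range f)ᶜ) (n : ℕ), E.symm (c, n) = f^[n] ↑c) ∧
      (∀ x, E (f x) = ((E x).1, (E x).2 + 1)) := by
  classical
  obtain ⟨hinj, hesc, _⟩ := hf
  have hpos : ∀ x, 0 < Nat.find (hesc x) := by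
    intro x
    rcases Nat.eq_zero_or_pos (Nat.find (hesc x)) with h0 | h
    · exact absurd (mem_range_iterate_zero f x) (h0 ▸ Nat.find_spec (hesc x))
    · exact h
  set dd : Ω → ℕ := fun x => Nat.find (hesc x) - 1 with hdd
  have hmem : ∀ x, x ∈ Set.range f^[dd x] := by
    intro x
    have := Nat.find_min (hesc x) (show dd x < Nat.find (hesc x) by
      simp only [hdd]; have := hpos x; omega)
    simpa using this
  have hnotmem : ∀ x, x ∉ Set.range f^[dd x + 1] := by
    intro x
    have : dd x + 1 = Nat.find (hesc x) := by
      simp only [hdd]; have := hpos x; omega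
    rw [this]
    exact Nat.find_spec (hesc x)
  set cc : Ω → Ω := fun x => (hmem x).choose with hcc
  have hccspec : ∀ x, f^[dd x] (cc x) = x := fun x => (hmem x).choose_spec
  have hccnot : ∀ x, cc x ∉ Set.range f := by
    rintro x ⟨y, hy⟩
    refine hnotmem x ⟨y, ?_⟩
    rw [Function.iterate_succ_apply, hy]
    exact hccspec x
  refine ⟨⟨fun x => (⟨cc x, hccnot x⟩, dd x), fun p => f^[p.2] ↑p.1, ?_, ?_⟩, ?_, ?_⟩
  · intro x
    exact hccspec x
  · rintro ⟨⟨c, hc⟩, n⟩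
    obtain ⟨h1, h2⟩ := free_uniq hinj (hccnot (f^[n] c)) hc (by rw [hccspec])
    simp only [Prod.mk.injEq, Subtype.mk.injEq]
    exact ⟨h2, h1⟩
  · intro c n; rfl
  · intro x
    have hrep : f^[dd x + 1] (cc x) = f x := by
      rw [Function.iterate_succ_apply', hccspec]
    obtain ⟨h1, h2⟩ := free_uniq hinj (hccnot (f x)) (hccnot x)
      (by rw [hccspec, ← hrep])
    simp only [Equiv.coe_fn_mk, Prod.mk.injEq, Subtype.mk.injEq]
    exact ⟨h2, h1⟩

lemma free_conj {f g : Ω → Ω} (hf : IsFreeInj f) (hg : IsFreeInj g) :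
    ∃ a : Equiv.Perm Ω, g = conjBy a f := by
  obtain ⟨Ef, hEfsymm, hEf⟩ := free_equiv hf
  obtain ⟨Eg, hEgsymm, hEg⟩ := free_equiv hg
  obtain ⟨eC⟩ := Cardinal.eq.mp (hf.2.2.trans hg.2.2.symm)
  set a : Equiv.Perm Ω := Ef.trans ((eC.prodCongr (Equiv.refl ℕ)).trans Eg.symm) with ha
  have key : ∀ x, a (f x) = g (a x) := by
    intro x
    have h1 : a (f x) = Eg.symm (eC (Ef x).1, (Ef x).2 + 1) := by
      simp [ha, hEf x, Prod.map]
    have h2 : a x = Eg.symm (eC (Ef x).1, (Ef x).2) := by simp [ha, Prod.map]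
    rw [h1, h2, hEgsymm, hEgsymm, Function.iterate_succ_apply']
  refine ⟨a.symm, ?_⟩
  funext y
  show g y = a.symm.symm (f (a.symm y))
  rw [Equiv.symm_symm, key (a.symm y), Equiv.apply_symm_apply]

lemma coim_eq_aleph0_of_infinite [Countable Ω] {s : Set Ω} (hs : Infinite ↥s) :
    Cardinal.mk ↥s = ℵ₀ := Cardinal.mk_eq_aleph0 ↥s

lemma factor_free [Countable Ω] [Infinite Ω] {g : Ω → Ω}
    (hginj : Function.Injective g) (hco : coim g = ℵ₀) :
    ∃ s₁ s₂ : Ω → Ω, IsFreeInj s₁ ∧ IsFreeInj s₂ ∧ g = s₂ ∘ s₁ := by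
  classical
  set D : Set Ω := (Set.range g)ᶜ with hD
  obtain ⟨δ⟩ : Nonempty (↥D ≃ ((Ω × ℕ) ⊕ ((Ω × ℕ) ⊕ ℕ))) := by
    refine Cardinal.eq.mp ?_
    rw [show Cardinal.mk ↥D = ℵ₀ from hco]
    exact (Cardinal.mk_eq_aleph0 _).symm
  set inD : ((Ω × ℕ) ⊕ ((Ω × ℕ) ⊕ ℕ)) → Ω := fun v => ↑(δ.symm v) with hinD
  have hinD_mem : ∀ v, inD v ∈ D := fun v => (δ.symm v).2
  have hinD_inj : Function.Injective inD :=
    Subtype.coe_injective.comp δ.symm.injective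
  have hδval : ∀ v (h : inD v ∈ D), δ ⟨inD v, h⟩ = v := by
    intro v h
    have : (⟨inD v, h⟩ : ↥D) = δ.symm v := Subtype.ext rfl
    rw [this, Equiv.apply_symm_apply]
  set ℓ₁ : Ω → ℕ := fun x =>
    if hx : x ∈ D then (match δ ⟨x, hx⟩ with
      | .inl (_, n) => n + 1
      | .inr _ => 0) else 0 with hℓ₁
  set s₁ : Ω → Ω := fun x => inD (.inl (x, ℓ₁ x)) with hs₁
  have hs₁inj : Function.Injective s₁ := by
    intro x y hxy
    have := hinD_inj hxy
    have := Sum.inl.inj this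
    exact (Prod.mk.injEq ..).mp this |>.1
  have hcert₁ : ∀ x, ℓ₁ x < ℓ₁ (s₁ x) := by
    intro x
    have hmem := hinD_mem (.inl (x, ℓ₁ x))
    have : ℓ₁ (s₁ x) = ℓ₁ x + 1 := by
      simp only [hℓ₁, hs₁]
      rw [dif_pos hmem, hδval]
    omega
  have hrange₁ : ∀ v, inD (.inr v) ∉ Set.range s₁ := by
    rintro v ⟨x, hx⟩
    exact Sum.inl_ne_inr (hinD_inj hx)
  have hfree₁ : IsFreeInj s₁ := by
    refine ⟨hs₁inj, escapes_of_cert s₁ ℓ₁ hcert₁, ?_⟩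
    refine coim_eq_aleph0_of_infinite ?_
    refine Infinite.of_injective (fun n : ℕ =>
      (⟨inD (.inr (.inr n)), hrange₁ _⟩ : ↥(Set.range s₁)ᶜ)) ?_
    intro m n hmn
    have h2 := congrArg Subtype.val hmn
    have := hinD_inj h2
    simpa using this
  set ℓ₂ : Ω → ℕ := fun y =>
    if hy : y ∈ D then (match δ ⟨y, hy⟩ with
      | .inr (.inl (_, n)) => n + 2
      | _ => 0) else 1 with hℓ₂
  set s₂ : Ω → Ω := fun y =>
    if hy : y ∈ Set.range s₁ then g hy.choose
    else inD (.inr (.inl (y, ℓ₂ y))) with hs₂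
  have hs₂s₁ : ∀ x, s₂ (s₁ x) = g x := by
    intro x
    have hy : s₁ x ∈ Set.range s₁ := ⟨x, rfl⟩
    simp only [hs₂]
    rw [dif_pos hy]
    exact congrArg g (hs₁inj hy.choose_spec)
  have hgnotD : ∀ x, g x ∉ D := fun x h => h ⟨x, rfl⟩
  have hcert₂ : ∀ y, ℓ₂ y < ℓ₂ (s₂ y) := by
    intro y
    by_cases hy : y ∈ Set.range s₁
    · obtain ⟨x, rfl⟩ := hy
      rw [hs₂s₁]
      have h1 : ℓ₂ (g x) = 1 := by
        simp only [hℓ₂]; rw [dif_neg (hgnotD x)]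
      have h0 : ℓ₂ (s₁ x) = 0 := by
        simp only [hℓ₂, hs₁]
        rw [dif_pos (hinD_mem _), hδval]
      omega
    · have : s₂ y = inD (.inr (.inl (y, ℓ₂ y))) := by
        simp only [hs₂]; rw [dif_neg hy]
      rw [this]
      have : ℓ₂ (inD (.inr (.inl (y, ℓ₂ y)))) = ℓ₂ y + 2 := by
        simp only [hℓ₂]
        rw [dif_pos (hinD_mem _), hδval]
      omega
  have hs₂inj : Function.Injective s₂ := by
    intro y z hyz
    by_cases hy : y ∈ Set.range s₁ <;> by_cases hz : z ∈ Set.range s₁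
    · obtain ⟨x, rfl⟩ := hy; obtain ⟨x', rfl⟩ := hz
      rw [hs₂s₁, hs₂s₁] at hyz
      rw [hginj hyz]
    · exfalso
      obtain ⟨x, rfl⟩ := hy
      rw [hs₂s₁] at hyz
      have : s₂ z = inD (.inr (.inl (z, ℓ₂ z))) := by
        simp only [hs₂]; rw [dif_neg hz]
      rw [this] at hyz
      exact hgnotD x (hyz ▸ hinD_mem _)
    · exfalso
      obtain ⟨x, rfl⟩ := hz
      rw [hs₂s₁] at hyz
      have : s₂ y = inD (.inr (.inl (y, ℓ₂ y))) := by
        simp only [hs₂]; rw [dif_neg hy]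
      rw [this] at hyz
      exact hgnotD x (hyz.symm ▸ hinD_mem _)
    · have h1 : s₂ y = inD (.inr (.inl (y, ℓ₂ y))) := by
        simp only [hs₂]; rw [dif_neg hy]
      have h2 : s₂ z = inD (.inr (.inl (z, ℓ₂ z))) := by
        simp only [hs₂]; rw [dif_neg hz]
      rw [h1, h2] at hyz
      have := hinD_inj hyz
      simpa using (Prod.mk.injEq .. ▸ (Sum.inl.inj (Sum.inr.inj this))).1
  have hrange₂ : ∀ n : ℕ, inD (.inr (.inr n)) ∉ Set.range s₂ := by
    rintro n ⟨y, hy⟩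
    by_cases h : y ∈ Set.range s₁
    · obtain ⟨x, rfl⟩ := h
      rw [hs₂s₁] at hy
      exact hgnotD x (hy ▸ hinD_mem _)
    · have : s₂ y = inD (.inr (.inl (y, ℓ₂ y))) := by
        simp only [hs₂]; rw [dif_neg h]
      rw [this] at hy
      exact Sum.inr_ne_inl (Sum.inr.inj (hinD_inj hy.symm))
  have hfree₂ : IsFreeInj s₂ := by
    refine ⟨hs₂inj, escapes_of_cert s₂ ℓ₂ hcert₂, ?_⟩
    refine coim_eq_aleph0_of_infinite ?_
    refine Infinite.of_injective (fun n : ℕ =>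
      (⟨inD (.inr (.inr n)), hrange₂ n⟩ : ↥(Set.range s₂)ᶜ)) ?_
    intro m n hmn
    have h2 := congrArg Subtype.val hmn
    have := hinD_inj h2
    simpa using this
  exact ⟨s₁, s₂, hfree₁, hfree₂, funext fun x => (hs₂s₁ x).symm⟩

/-- The 4-piece shuffle permutation used to build the conjugator. -/
def tripPerm (β α : Type*) : Equiv.Perm ((β ⊕ α ⊕ α) ⊕ α) where
  toFun := fun x => match x with
    | .inl (.inl n) => .inl (.inl n)
    | .inl (.inr (.inl q)) => .inr q
    | .inl (.inr (.inr q)) => .inl (.inr (.inl q))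
    | .inr q => .inl (.inr (.inr q))
  invFun := fun x => match x with
    | .inl (.inl n) => .inl (.inl n)
    | .inl (.inr (.inl q)) => .inl (.inr (.inr q))
    | .inl (.inr (.inr q)) => .inr q
    | .inr q => .inl (.inr (.inl q))
  left_inv := by rintro ((n | (q | q)) | q) <;> rfl
  right_inv := by rintro ((n | (q | q)) | q) <;> rfl

lemma step1 [Countable Ω] [Infinite Ω] {f : Ω → Ω}
    (hf : Function.Injective f) (hco : coim f = ℵ₀) :
    ∃ a : Equiv.Perm Ω, IsFreeInj (rcomp (conjBy a f) f) := by
  classical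
  set Rc : Set Ω := (Set.range f)ᶜ with hRc
  set Qs : Set Ω := {x | ∀ n : ℕ, x ∈ Set.range f^[n]} with hQs
  -- basic facts
  have hQR : ∀ x ∈ Qs, x ∈ Set.range f := by
    intro x hx
    have := hx 1
    simpa using this
  have hdisj : Disjoint Rc Qs := by
    rw [Set.disjoint_left]
    intro x hx hq
    exact hx (hQR x hq)
  have hQf : ∀ x ∈ Qs, f x ∈ Qs := by
    intro x hx n
    match n with
    | 0 => exact mem_range_iterate_zero f _
    | n+1 =>
      obtain ⟨y, hy⟩ := hx n
      exact ⟨y, by rw [Function.iterate_succ_apply', hy]⟩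
  have hEf : ∀ x, (∃ n, x ∉ Set.range f^[n]) → (∃ n, f x ∉ Set.range f^[n]) := by
    rintro x ⟨n, hn⟩
    refine ⟨n + 1, ?_⟩
    rintro ⟨y, hy⟩
    rw [Function.iterate_succ_apply'] at hy
    exact hn ⟨y, hf hy⟩
  have hEr : ∀ x ∈ Rc, ∃ n, x ∉ Set.range f^[n] := by
    intro x hx
    refine ⟨1, ?_⟩
    rw [Function.iterate_one]
    exact hx
  have hnQ : ∀ x, (∃ n, x ∉ Set.range f^[n]) → x ∉ Qs := by
    rintro x ⟨n, hn⟩ hq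
    exact hn (hq n)
  have hRnQ : ∀ x ∈ Rc, x ∉ Qs := fun x hx => hnQ x (hEr x hx)
  -- the depth function
  set d : Ω → ℕ := fun x =>
    if h : ∃ n, x ∉ Set.range f^[n] then Nat.find h - 1 else 0 with hd
  have hfindpos : ∀ (x : Ω) (h : ∃ n, x ∉ Set.range f^[n]), 0 < Nat.find h := by
    intro x h
    rcases Nat.eq_zero_or_pos (Nat.find h) with h0 | hp
    · exact absurd (mem_range_iterate_zero f x) (h0 ▸ Nat.find_spec h)
    · exact hp
  have hd0 : ∀ x ∈ Rc, d x = 0 := by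
    intro x hx
    have h := hEr x hx
    have h1 : Nat.find h ≤ 1 := Nat.find_le (by rw [Function.iterate_one]; exact hx)
    simp only [hd]
    rw [dif_pos h]
    omega
  have hdsucc : ∀ x, (h : ∃ n, x ∉ Set.range f^[n]) → d (f x) = d x + 1 := by
    intro x h
    have h' := hEf x h
    have hup : Nat.find h' ≤ Nat.find h + 1 := by
      refine Nat.find_le ?_
      rintro ⟨y, hy⟩
      rw [Function.iterate_succ_apply'] at hy
      exact Nat.find_spec h ⟨y, hf hy⟩
    have hlow : Nat.find h < Nat.find h' := by
      rw [Nat.lt_find_iff]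
      intro m hm hmem
      match m, hmem with
      | 0, hmem => exact hmem (mem_range_iterate_zero f _)
      | m+1, hmem =>
        have : x ∈ Set.range f^[m] := by
          by_contra hc
          exact absurd hc (Nat.find_min h (by omega))
        obtain ⟨y, hy⟩ := this
        exact hmem ⟨y, by rw [Function.iterate_succ_apply', hy]⟩
    have hp := hfindpos x h
    simp only [hd]
    rw [dif_pos h, dif_pos h']
    omega
  -- the conjugating permutation
  set W : Set Ω := Rc ∪ Qs with hW
  have hInfRc : Infinite ↥Rc := by
    rw [Cardinal.infinite_iff]
    exact le_of_eq hco.symm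
  have hInfT : Infinite (ℕ ⊕ ↥Qs ⊕ ↥Qs) :=
    Infinite.of_injective Sum.inl Sum.inl_injective
  obtain ⟨κ⟩ : Nonempty (↥Rc ≃ (ℕ ⊕ ↥Qs ⊕ ↥Qs)) := by
    refine Cardinal.eq.mp ?_
    rw [show Cardinal.mk ↥Rc = ℵ₀ from hco]
    exact (Cardinal.mk_eq_aleph0 _).symm
  set eW : ↥W ≃ ↥Rc ⊕ ↥Qs := Equiv.Set.union hdisj with heW
  set E : ↥W ≃ ((ℕ ⊕ ↥Qs ⊕ ↥Qs) ⊕ ↥Qs) :=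
    eW.trans (Equiv.sumCongr κ (Equiv.refl ↥Qs)) with hE
  set π : Equiv.Perm ((ℕ ⊕ ↥Qs ⊕ ↥Qs) ⊕ ↥Qs) := tripPerm ℕ ↥Qs with hπ
  set w : Equiv.Perm ↥W := (E.symm).permCongr π with hw
  set a : Equiv.Perm Ω := Equiv.Perm.subtypeCongr w (Equiv.refl {x // ¬ x ∈ W}) with ha
  have hwval : ∀ u : ↥W, w u = E.symm (π (E u)) := by
    intro u
    simp [hw]
  have haW : ∀ (x : Ω) (h : x ∈ W), a x = ↑(E.symm (π (E ⟨x, h⟩))) := by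
    intro x h
    rw [ha, Equiv.Perm.subtypeCongr.left_apply _ _ h, hwval]
  have haNW : ∀ (x : Ω), x ∉ W → a x = x := by
    intro x h
    rw [ha, Equiv.Perm.subtypeCongr.right_apply _ _ h]
    rfl
  have haNWsymm : ∀ (x : Ω), x ∉ W → a.symm x = x := by
    intro x h
    rw [Equiv.symm_apply_eq]
    exact (haNW x h).symm
  -- coordinates
  have hE1 : ∀ (x : Ω) (hW : x ∈ W) (hx : x ∈ Rc),
      E ⟨x, hW⟩ = Sum.inl (κ ⟨x, hx⟩) := by
    intro x hWx hx
    rw [hE]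
    simp only [Equiv.trans_apply]
    rw [Equiv.Set.union_apply_left hdisj hx]
    rfl
  have hE2 : ∀ (x : Ω) (hW : x ∈ W) (hx : x ∈ Qs),
      E ⟨x, hW⟩ = Sum.inr ⟨x, hx⟩ := by
    intro x hWx hx
    rw [hE]
    simp only [Equiv.trans_apply]
    rw [Equiv.Set.union_apply_right hdisj hx]
    rfl
  have hES1 : ∀ m : (ℕ ⊕ ↥Qs ⊕ ↥Qs),
      (↑(E.symm (Sum.inl m)) : Ω) = ↑(κ.symm m) := by
    intro m
    rfl
  have hES2 : ∀ q : ↥Qs, (↑(E.symm (Sum.inr q)) : Ω) = ↑q := by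
    intro q
    rfl
  set S : Set Ω := {x | ∃ hx : x ∈ Rc, ∃ q, κ ⟨x, hx⟩ = Sum.inr (Sum.inl q)} with hS
  have hSRc : S ⊆ Rc := fun x hx => hx.choose
  -- F1 : Qs goes into Rc
  have hF1 : ∀ x ∈ Qs, a x ∈ Rc := by
    intro x hx
    have hWx : x ∈ W := Or.inr hx
    rw [haW x hWx, hE2 x hWx hx]
    have : π (Sum.inr ⟨x, hx⟩) = Sum.inl (Sum.inr (Sum.inr ⟨x, hx⟩)) := rfl
    rw [this, hES1]
    exact (κ.symm _).2
  -- F2 : S goes into Qs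
  have hF2 : ∀ x ∈ S, a x ∈ Qs := by
    rintro x ⟨hx, q, hq⟩
    have hWx : x ∈ W := Or.inl hx
    rw [haW x hWx, hE1 x hWx hx, hq]
    have : π (Sum.inl (Sum.inr (Sum.inl q))) = Sum.inr q := rfl
    rw [this, hES2]
    exact q.2
  -- F3 : a.symm maps Qs into S
  have hF3 : ∀ y ∈ Qs, a.symm y ∈ S := by
    intro y hy
    set m : (ℕ ⊕ ↥Qs ⊕ ↥Qs) := Sum.inr (Sum.inl ⟨y, hy⟩) with hm
    set x : Ω := ↑(E.symm (Sum.inl m)) with hx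
    have hxval : x = ↑(κ.symm m) := hES1 m
    have hxRc : x ∈ Rc := by rw [hxval]; exact (κ.symm m).2
    have hκx : κ ⟨x, hxRc⟩ = m := by
      have : (⟨x, hxRc⟩ : ↥Rc) = κ.symm m := Subtype.ext hxval
      rw [this, Equiv.apply_symm_apply]
    have hxS : x ∈ S := ⟨hxRc, ⟨y, hy⟩, hκx⟩
    have hax : a x = y := by
      have hWx : x ∈ W := Or.inl hxRc
      rw [haW x hWx, hE1 x hWx hxRc, hκx]
      have : π (Sum.inl m) = Sum.inr ⟨y, hy⟩ := rfl
      rw [this, hES2]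
    rw [show a.symm y = x from by rw [Equiv.symm_apply_eq, hax]]
    exact hxS
  -- F4 : Rc \ S goes into Rc
  have hF4 : ∀ x, x ∈ Rc → x ∉ S → a x ∈ Rc := by
    intro x hx hxS
    have hWx : x ∈ W := Or.inl hx
    rw [haW x hWx, hE1 x hWx hx]
    rcases hκ : κ ⟨x, hx⟩ with n | (q | q)
    · have : π (Sum.inl (Sum.inl n)) = Sum.inl (Sum.inl n) := rfl
      rw [this, hES1]
      exact (κ.symm _).2
    · exact absurd ⟨hx, q, hκ⟩ hxS
    · have : π (Sum.inl (Sum.inr (Sum.inr q))) = Sum.inl (Sum.inr (Sum.inl q)) := rfl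
      rw [this, hES1]
      exact (κ.symm _).2
  -- the level function
  set ℓ : Ω → ℕ := fun x => if x ∈ Qs ∨ x ∈ S then 0 else d x with hℓ
  set t : Ω → Ω := rcomp (conjBy a f) f with ht
  have htval : ∀ x, t x = f (a.symm (f (a x))) := fun x => rfl
  have hℓval : ∀ z, (∃ n, z ∉ Set.range f^[n]) → ℓ (f z) = d z + 1 := by
    intro z hz
    have h1 : f z ∉ Qs := hnQ _ (hEf z hz)
    have h2 : f z ∉ S := fun hmem => (hSRc hmem) ⟨z, rfl⟩
    simp only [hℓ]
    rw [if_neg (by tauto)]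
    exact hdsucc z hz
  have hfnW : ∀ z, (∃ n, z ∉ Set.range f^[n]) → f z ∉ W := by
    intro z hz
    rintro (h | h)
    · exact h ⟨z, rfl⟩
    · exact hnQ _ (hEf z hz) h
  have hcert : ∀ x, ℓ x < ℓ (t x) := by
    intro x
    by_cases hxQ : x ∈ Qs
    · -- a x ∈ Rc, t x = f (f (a x))
      have hu : a x ∈ Rc := hF1 x hxQ
      have hu_esc := hEr _ hu
      have hfu_esc := hEf _ hu_esc
      have hfix : a.symm (f (a x)) = f (a x) := haNWsymm _ (hfnW _ hu_esc)
      have : ℓ (t x) = 2 := by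
        rw [htval, hfix, hℓval _ hfu_esc, hdsucc _ hu_esc, hd0 _ hu]
      rw [this]
      simp only [hℓ]
      rw [if_pos (Or.inl hxQ)]
      omega
    · by_cases hxS : x ∈ S
      · -- a x ∈ Qs, z := a.symm (f (a x)) ∈ S ⊆ Rc
        have hu : a x ∈ Qs := hF2 x hxS
        have hfu : f (a x) ∈ Qs := hQf _ hu
        have hzS : a.symm (f (a x)) ∈ S := hF3 _ hfu
        have hzRc := hSRc hzS
        have hz_esc := hEr _ hzRc
        have : ℓ (t x) = 1 := by
          rw [htval, hℓval _ hz_esc, hd0 _ hzRc]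
        rw [this]
        simp only [hℓ]
        rw [if_pos (Or.inr hxS)]
        omega
      · by_cases hxR : x ∈ Rc
        · -- a x ∈ Rc again
          have hu : a x ∈ Rc := hF4 x hxR hxS
          have hu_esc := hEr _ hu
          have hfu_esc := hEf _ hu_esc
          have hfix : a.symm (f (a x)) = f (a x) := haNWsymm _ (hfnW _ hu_esc)
          have : ℓ (t x) = 2 := by
            rw [htval, hfix, hℓval _ hfu_esc, hdsucc _ hu_esc, hd0 _ hu]
          rw [this]
          simp only [hℓ]
          rw [if_neg (by tauto), hd0 _ hxR]
          omega
        · -- x ∉ W entirely: a x = x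
          have hx_esc : ∃ n, x ∉ Set.range f^[n] := by
            by_contra hc
            push_neg at hc
            exact hxQ hc
          have hxnW : x ∉ W := fun h => h.elim hxR hxQ
          have hax : a x = x := haNW x hxnW
          have hfx_esc := hEf _ hx_esc
          have hfix : a.symm (f x) = f x := haNWsymm _ (hfnW _ hx_esc)
          have : ℓ (t x) = d x + 2 := by
            rw [htval, hax, hfix, hℓval _ hfx_esc, hdsucc _ hx_esc]
          rw [this]
          simp only [hℓ]
          rw [if_neg (by tauto)]
          omega
  -- assemble
  refine ⟨a, ?_, escapes_of_cert t ℓ hcert, ?_⟩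
  · intro x y hxy
    have := hf hxy
    have := a.symm.injective this
    have := hf this
    exact a.injective this
  · have hsub : Rc ⊆ (Set.range t)ᶜ := by
      intro x hx
      rintro ⟨y, hy⟩
      exact hx ⟨a.symm (f (a y)), by rw [← htval, hy]⟩
    have : Infinite ↥(Set.range t)ᶜ :=
      Infinite.of_injective (Set.inclusion hsub) (Set.inclusion_injective hsub)
    exact Cardinal.mk_eq_aleph0 _

theorem stmt_5 [Countable Ω] [Infinite Ω] (M : Set (Ω → Ω))
    (hM : IsSubmonoidOfInj M) (hnorm : IsNormalSet M) :
    M ∩ injInfSet Ω = ∅ ∨ injInfSet Ω ⊆ M := by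
  by_cases hM0 : M ∩ injInfSet Ω = ∅
  · exact Or.inl hM0
  · right
    obtain ⟨f, hfM, hfmem⟩ : ∃ f, f ∈ M ∧ f ∈ injInfSet Ω := by
      rcases Set.nonempty_iff_ne_empty.mpr hM0 with ⟨f, hf1, hf2⟩
      exact ⟨f, hf1, hf2⟩
    obtain ⟨a, hfree⟩ := step1 hfmem.1 hfmem.2
    have htM : rcomp (conjBy a f) f ∈ M :=
      hM.2.2 _ (hnorm f hfM a) f hfM
    intro g hg
    obtain ⟨s₁, s₂, h1, h2, hfact⟩ := factor_free hg.1 hg.2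
    obtain ⟨b₁, hb₁⟩ := free_conj hfree h1
    obtain ⟨b₂, hb₂⟩ := free_conj hfree h2
    have hs₁M : s₁ ∈ M := by rw [hb₁]; exact hnorm _ htM b₁
    have hs₂M : s₂ ∈ M := by rw [hb₂]; exact hnorm _ htM b₂
    have hgM : rcomp s₁ s₂ ∈ M := hM.2.2 s₁ hs₁M s₂ hs₂M
    have hgeq : g = rcomp s₁ s₂ := hfact
    rw [hgeq]
    exact hgM
end

section
/- Let M ⊆ Inj(Ω) be any submonoid that contains Sym(Ω), and let f ∈ M. If g ∈ Inj(Ω) satisfies |Ω \ g(Ω)| = |Ω \ f(Ω)|, then g ∈ M. -/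
open Cardinal Function Set

universe u
variable {Ω : Type u}

theorem stmt_6 [Countable Ω] [Infinite Ω] (M : Set (Ω → Ω))
    (hM : IsSubmonoidOfInj M) (hsym : symSet Ω ⊆ M)
    (f : Ω → Ω) (hfM : f ∈ M) (g : Ω → Ω) (hg : Function.Injective g)
    (hcoim : coim g = coim f) : g ∈ M := by
  have hf : Function.Injective f := hM.1 f hfM
  have hcard : Nonempty ((↥(Set.range f)ᶜ) ≃ (↥(Set.range g)ᶜ)) := by
    rw [← Cardinal.eq]; exact hcoim.symm
  obtain ⟨ψ⟩ := hcard
  classical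
  let φ : Set.range f ≃ Set.range g :=
    (Equiv.ofInjective f hf).symm.trans (Equiv.ofInjective g hg)
  let a : Ω ≃ Ω :=
    (Equiv.Set.sumCompl (Set.range f)).symm.trans
      ((φ.sumCongr ψ).trans (Equiv.Set.sumCompl (Set.range g)))
  have ha : rcomp f ⇑a ∈ M := hM.2.2 f hfM ⇑a (hsym a.bijective)
  have heq : rcomp f ⇑a = g := by
    funext x
    have hmem : f x ∈ Set.range f := ⟨x, rfl⟩
    simp only [rcomp, Function.comp_apply, a, Equiv.trans_apply,
      Equiv.Set.sumCompl_symm_apply_of_mem hmem, Equiv.sumCongr_apply,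
      Sum.map_inl, Equiv.Set.sumCompl_apply_inl]
    show ((φ ⟨f x, hmem⟩ : Set.range g) : Ω) = g x
    simp [φ, Equiv.ofInjective, Function.leftInverse_invFun hf x]
  rwa [heq] at ha
end

section
/- For any additive submonoid N ⊆ ℕ, both Sym(Ω) ∪ S(N) and Sym(Ω) ∪ S(N) ∪ Inj_∞(Ω) are submonoids of Inj(Ω). Conversely, every submonoid M ⊆ Inj(Ω) that contains Sym(Ω) is either of the form Sym(Ω) ∪ S(N) or of the form Sym(Ω) ∪ S(N) ∪ Inj_∞(Ω) for some additive submonoid N ⊆ ℕ, namely N = M_ℕ. -/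
open Cardinal Function Set

universe u
variable {Ω : Type u}

lemma coim_eq_zero_iff {f : Ω → Ω} : coim f = 0 ↔ Function.Surjective f := by
  rw [coim, Cardinal.mk_eq_zero_iff, isEmpty_subtype]
  simp [Set.mem_compl_iff, Function.Surjective]

lemma coim_id : coim (id : Ω → Ω) = 0 :=
  coim_eq_zero_iff.mpr surjective_id

lemma coim_le_aleph0 [Countable Ω] (f : Ω → Ω) : coim f ≤ ℵ₀ :=
  Cardinal.mk_le_aleph0

lemma coim_rcomp {f g : Ω → Ω} (hg : Function.Injective g) :
    coim (rcomp f g) = coim f + coim g := by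
  have hset : (Set.range (rcomp f g))ᶜ = g '' (Set.range f)ᶜ ∪ (Set.range g)ᶜ := by
    have hr : Set.range (rcomp f g) = g '' Set.range f := by
      rw [rcomp, Set.range_comp]
    rw [hr]
    ext y
    constructor
    · intro h
      by_cases hy : y ∈ Set.range g
      · obtain ⟨x, rfl⟩ := hy
        exact Or.inl ⟨x, fun hxr => h (Set.mem_image_of_mem g hxr), rfl⟩
      · exact Or.inr hy
    · rintro (⟨x, hx, rfl⟩ | h) hcon
      · obtain ⟨x', hx', he⟩ := hcon
        exact hx (hg he ▸ hx')
      · exact h (Set.image_subset_range g _ hcon)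
  have hdisj : Disjoint (g '' (Set.range f)ᶜ) (Set.range g)ᶜ := by
    rw [Set.disjoint_compl_right_iff_subset]
    exact (Set.image_subset_range g _)
  rw [coim, hset, Cardinal.mk_union_of_disjoint hdisj, Cardinal.mk_image_eq hg]
  rfl

lemma exists_perm_factor {f g : Ω → Ω} (hf : Function.Injective f)
    (hg : Function.Injective g) (h : coim f = coim g) :
    ∃ a : Ω → Ω, Function.Bijective a ∧ g = rcomp f a := by
  classical
  obtain ⟨e3⟩ := Cardinal.eq.mp h
  let a : Ω ≃ Ω :=
    ((Equiv.Set.sumCompl (Set.range f)).symm.trans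
      (Equiv.sumCongr ((Equiv.ofInjective f hf).symm.trans (Equiv.ofInjective g hg)) e3)).trans
      (Equiv.Set.sumCompl (Set.range g))
  refine ⟨a, a.bijective, ?_⟩
  funext x
  show g x = a (f x)
  simp only [a, Equiv.trans_apply]
  rw [Equiv.Set.sumCompl_symm_apply_of_mem (Set.mem_range_self x)]
  simp [Equiv.ofInjective_apply]

lemma mem_symSN_iff (N : AddSubmonoid ℕ) {f : Ω → Ω} :
    f ∈ symSet Ω ∪ SN Ω (N : Set ℕ) ↔
      Function.Injective f ∧ ∃ n : ℕ, n ∈ N ∧ coim f = n := by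
  constructor
  · rintro (hf | ⟨hinj, n, hn, _, hc⟩)
    · exact ⟨hf.injective, 0, N.zero_mem, by rw [Nat.cast_zero, coim_eq_zero_iff]; exact hf.surjective⟩
    · exact ⟨hinj, n, hn, hc⟩
  · rintro ⟨hinj, n, hn, hc⟩
    rcases eq_or_ne n 0 with rfl | hne
    · exact Or.inl ⟨hinj, coim_eq_zero_iff.mp (by rwa [Nat.cast_zero] at hc)⟩
    · exact Or.inr ⟨hinj, n, hn, hne, hc⟩

theorem stmt_7 [Countable Ω] [Infinite Ω] :
    (∀ N : AddSubmonoid ℕ,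
      IsSubmonoidOfInj (symSet Ω ∪ SN Ω (N : Set ℕ)) ∧
      IsSubmonoidOfInj (symSet Ω ∪ SN Ω (N : Set ℕ) ∪ injInfSet Ω)) ∧
    ∀ M : Set (Ω → Ω), IsSubmonoidOfInj M → symSet Ω ⊆ M →
      ∃ N : AddSubmonoid ℕ, (N : Set ℕ) = MN M ∧
        (M = symSet Ω ∪ SN Ω (N : Set ℕ) ∨
         M = symSet Ω ∪ SN Ω (N : Set ℕ) ∪ injInfSet Ω) := by
  constructor
  · intro N
    constructor
    · refine ⟨fun f hf => ((mem_symSN_iff N).mp hf).1, ?_, ?_⟩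
      · exact (mem_symSN_iff N).mpr ⟨injective_id, 0, N.zero_mem, by rw [Nat.cast_zero, coim_id]⟩
      · intro f hf g hg
        obtain ⟨hfi, m, hm, hcm⟩ := (mem_symSN_iff N).mp hf
        obtain ⟨hgi, n, hn, hcn⟩ := (mem_symSN_iff N).mp hg
        refine (mem_symSN_iff N).mpr ⟨hgi.comp hfi, m + n, N.add_mem hm hn, ?_⟩
        rw [coim_rcomp hgi, hcm, hcn, Nat.cast_add]
    · have hchar : ∀ f : Ω → Ω,
          f ∈ symSet Ω ∪ SN Ω (N : Set ℕ) ∪ injInfSet Ω ↔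
            Function.Injective f ∧ ((∃ n : ℕ, n ∈ N ∧ coim f = n) ∨ coim f = ℵ₀) := by
        intro f
        constructor
        · rintro (hf | ⟨hinj, hc⟩)
          · obtain ⟨hinj, n, hn, hc⟩ := (mem_symSN_iff N).mp hf
            exact ⟨hinj, Or.inl ⟨n, hn, hc⟩⟩
          · exact ⟨hinj, Or.inr hc⟩
        · rintro ⟨hinj, (⟨n, hn, hc⟩ | hc)⟩
          · exact Or.inl ((mem_symSN_iff N).mpr ⟨hinj, n, hn, hc⟩)
          · exact Or.inr ⟨hinj, hc⟩
      refine ⟨fun f hf => ((hchar f).mp hf).1, ?_, ?_⟩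
      · exact (hchar id).mpr ⟨injective_id, Or.inl ⟨0, N.zero_mem, by rw [Nat.cast_zero, coim_id]⟩⟩
      · intro f hf g hg
        obtain ⟨hfi, hf'⟩ := (hchar f).mp hf
        obtain ⟨hgi, hg'⟩ := (hchar g).mp hg
        refine (hchar _).mpr ⟨hgi.comp hfi, ?_⟩
        rw [coim_rcomp hgi]
        rcases hf' with ⟨m, hm, hcm⟩ | hcm
        · rcases hg' with ⟨n, hn, hcn⟩ | hcn
          · exact Or.inl ⟨m + n, N.add_mem hm hn, by rw [hcm, hcn, Nat.cast_add]⟩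
          · refine Or.inr ?_
            rw [hcm, hcn]
            exact le_antisymm (by
              calc (m : Cardinal) + ℵ₀ ≤ ℵ₀ + ℵ₀ :=
                    add_le_add_left (le_of_lt (Cardinal.nat_lt_aleph0 m)) _
                _ = ℵ₀ := Cardinal.aleph0_add_aleph0)
              le_add_self
        · refine Or.inr ?_
          rw [hcm]
          refine le_antisymm ?_ le_self_add
          calc ℵ₀ + coim g ≤ ℵ₀ + ℵ₀ := add_le_add_right (coim_le_aleph0 g) _
            _ = ℵ₀ := Cardinal.aleph0_add_aleph0
  · intro M hM hsym
    obtain ⟨hMinj, hMid, hMmul⟩ := hM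
    have key : ∀ g : Ω → Ω, Function.Injective g → (∃ f ∈ M, coim f = coim g) → g ∈ M := by
      rintro g hg ⟨f, hfM, hc⟩
      obtain ⟨a, ha, rfl⟩ := exists_perm_factor (hMinj f hfM) hg hc
      exact hMmul f hfM a (hsym ha)
    refine ⟨⟨⟨MN M, fun {m n} hm hn => ?_⟩, ?_⟩, rfl, ?_⟩
    · obtain ⟨f, hfM, hcf⟩ := hm
      obtain ⟨g, hgM, hcg⟩ := hn
      exact ⟨rcomp f g, hMmul f hfM g hgM, by
        rw [coim_rcomp (hMinj g hgM), hcf, hcg, Nat.cast_add]⟩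
    · exact ⟨id, hMid, by rw [coim_id, Nat.cast_zero]⟩
    · by_cases hinf : ∃ f ∈ M, coim f = ℵ₀
      · refine Or.inr (Set.eq_of_subset_of_subset ?_ ?_)
        · intro f hfM
          have hfi := hMinj f hfM
          rcases lt_or_eq_of_le (coim_le_aleph0 f) with hlt | heq
          · obtain ⟨n, hn⟩ := Cardinal.lt_aleph0.mp hlt
            exact Or.inl ((mem_symSN_iff _).mpr ⟨hfi, n, ⟨f, hfM, hn⟩, hn⟩)
          · exact Or.inr ⟨hfi, heq⟩
        · rintro f (hf | ⟨hfi, hc⟩)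
          · obtain ⟨hfi, n, ⟨f', hf'M, hcf'⟩, hc⟩ := (mem_symSN_iff _).mp hf
            exact key f hfi ⟨f', hf'M, by rw [hcf', hc]⟩
          · obtain ⟨f', hf'M, hcf'⟩ := hinf
            exact key f hfi ⟨f', hf'M, by rw [hcf', hc]⟩
      · refine Or.inl (Set.eq_of_subset_of_subset ?_ ?_)
        · intro f hfM
          have hfi := hMinj f hfM
          rcases lt_or_eq_of_le (coim_le_aleph0 f) with hlt | heq
          · obtain ⟨n, hn⟩ := Cardinal.lt_aleph0.mp hlt
            exact (mem_symSN_iff _).mpr ⟨hfi, n, ⟨f, hfM, hn⟩, hn⟩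
          · exact absurd ⟨f, hfM, heq⟩ hinf
        · intro f hf
          obtain ⟨hfi, n, ⟨f', hf'M, hcf'⟩, hc⟩ := (mem_symSN_iff _).mp hf
          exact key f hfi ⟨f', hf'M, by rw [hcf', hc]⟩
end

section
/- Let f ∈ Inj(Ω) be any injective map and h ∈ Fin(Ω) a finitary permutation. Then (f)C_open = (hf)C_open and (f)C_open = (fh)C_open, i.e., composing f on either side with a finitary permutation does not change the number of open cycles. -/
open Cardinal Function Set

universe u
variable {Ω : Type u}

section Stmt9Aux

/-- The orbit-equivalence class of `α` under `f`. -/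
def fcls (f : Ω → Ω) (α : Ω) : Set Ω := {γ | ∃ m n, f^[m] γ = f^[n] α}

lemma mem_fcls_self (f : Ω → Ω) (α : Ω) : α ∈ fcls f α := ⟨0, 0, rfl⟩

lemma fcls_symm {f : Ω → Ω} {α β : Ω} (h : β ∈ fcls f α) : α ∈ fcls f β := by
  obtain ⟨m, n, h⟩ := h; exact ⟨n, m, h.symm⟩

lemma fcls_trans {f : Ω → Ω} {α β γ : Ω} (h1 : γ ∈ fcls f β) (h2 : β ∈ fcls f α) :
    γ ∈ fcls f α := by
  obtain ⟨a, b, h1⟩ := h1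
  obtain ⟨c, d, h2⟩ := h2
  refine ⟨c + a, b + d, ?_⟩
  rw [iterate_add_apply, h1, ← iterate_add_apply, Nat.add_comm c b, iterate_add_apply, h2,
    ← iterate_add_apply]

lemma fcls_eq_of_mem {f : Ω → Ω} {α β : Ω} (h : β ∈ fcls f α) : fcls f β = fcls f α := by
  ext γ
  exact ⟨fun hg => fcls_trans hg h, fun hg => fcls_trans hg (fcls_symm h)⟩

lemma iterate_mem_fcls (f : Ω → Ω) (α : Ω) (n : ℕ) : f^[n] α ∈ fcls f α := ⟨0, n, rfl⟩

lemma apply_mem_fcls_iff {f : Ω → Ω} {α γ : Ω} : f γ ∈ fcls f α ↔ γ ∈ fcls f α := by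
  constructor
  · rintro ⟨m, n, h⟩
    refine ⟨m + 1, n, ?_⟩
    rwa [iterate_add_apply, iterate_one]
  · rintro ⟨m, n, h⟩
    refine ⟨m, n + 1, ?_⟩
    rw [← iterate_succ_apply, iterate_succ_apply', iterate_succ_apply', h]

lemma iterate_mem_fcls_iff {f : Ω → Ω} {α γ : Ω} (n : ℕ) :
    f^[n] γ ∈ fcls f α ↔ γ ∈ fcls f α := by
  induction n with
  | zero => rfl
  | succ k ih =>
    rw [iterate_succ_apply', apply_mem_fcls_iff, ih]

/-- invariant sets are closed under iterates in both directions -/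
lemma iterate_mem_iff_of_inv {f : Ω → Ω} {t : Set Ω} (ht : ∀ α, f α ∈ t ↔ α ∈ t)
    (n : ℕ) (γ : Ω) : f^[n] γ ∈ t ↔ γ ∈ t := by
  induction n with
  | zero => rfl
  | succ k ih => rw [iterate_succ_apply', ht, ih]

lemma isCycleUnder_iff {f : Ω → Ω} {s : Set Ω} :
    IsCycleUnder f s ↔ ∃ α, s = fcls f α := by
  constructor
  · rintro ⟨⟨α, hα⟩, hinv, hmin⟩
    refine ⟨α, (hmin (fcls f α) ?_ ⟨α, mem_fcls_self f α⟩ fun γ => apply_mem_fcls_iff).symm⟩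
    rintro γ ⟨m, n, hmn⟩
    have h1 : f^[n] α ∈ s := (iterate_mem_iff_of_inv hinv n α).mpr hα
    rw [← hmn] at h1
    exact (iterate_mem_iff_of_inv hinv m γ).mp h1
  · rintro ⟨α, rfl⟩
    refine ⟨⟨α, mem_fcls_self f α⟩, fun γ => apply_mem_fcls_iff, ?_⟩
    intro t hts ⟨β, hβ⟩ hinv
    apply Set.Subset.antisymm hts
    intro γ hγ
    have hβα : β ∈ fcls f α := hts hβ
    obtain ⟨m, n, hmn⟩ := fcls_trans hγ (fcls_symm hβα)
    have : f^[n] β ∈ t := (iterate_mem_iff_of_inv hinv n β).mpr hβ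
    rw [← hmn] at this
    exact (iterate_mem_iff_of_inv hinv m γ).mp this

lemma fcls_eq_of_isCycleUnder {f : Ω → Ω} {s : Set Ω} (hs : IsCycleUnder f s) {β : Ω}
    (hβ : β ∈ s) : s = fcls f β := by
  obtain ⟨α, rfl⟩ := isCycleUnder_iff.mp hs
  exact (fcls_eq_of_mem hβ).symm

/-- aperiodicity -/
def Aper (f : Ω → Ω) (α : Ω) : Prop := ∀ m n : ℕ, f^[m] α = f^[n] α → m = n

lemma aper_of_infinite {f : Ω → Ω} (hf : Injective f) {α : Ω}
    (h : (fcls f α).Infinite) : Aper f α := by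
  intro m n hmn
  by_contra hne
  -- wlog m < n
  wlog hlt : m < n generalizing m n
  · exact this n m hmn.symm (Ne.symm hne) (by omega)
  have hper : α = f^[n - m] α := by
    apply (hf.iterate m)
    rw [← iterate_add_apply, Nat.add_sub_cancel' hlt.le, hmn]
  set p := n - m with hp
  have hp0 : 0 < p := by omega
  have hred : ∀ j : ℕ, f^[j + p] α = f^[j] α := by
    intro j; rw [iterate_add_apply, ← hper]
  have hmul : ∀ k j : ℕ, f^[j + k * p] α = f^[j] α := by
    intro k
    induction k with
    | zero => simp
    | succ i ih => intro j
                   have : j + (i+1) * p = (j + p) + i * p := by ring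
                   rw [this, ih, hred]
  have hsub : fcls f α ⊆ (fun j => f^[j] α) '' (Set.Iio p) := by
    rintro γ ⟨a, b, hab⟩
    have hb : f^[b + a * p] α = f^[b] α := hmul a b
    have key : γ = f^[b + a * p - a] α := by
      apply hf.iterate a
      rw [hab, ← hb, ← iterate_add_apply, Nat.add_sub_cancel' (by nlinarith : a ≤ b + a * p)]
    have hmod : ∀ j, f^[j] α = f^[j % p] α := by
      intro j
      conv_lhs => rw [← Nat.mod_add_div' j p]
      exact hmul (j / p) (j % p)
    refine ⟨(b + a * p - a) % p, Nat.mod_lt _ hp0, ?_⟩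
    rw [key, hmod]
  exact h (((Set.finite_Iio p).image _).subset hsub)

lemma infinite_of_aper {f : Ω → Ω} {α : Ω} (h : Aper f α) : (fcls f α).Infinite := by
  exact Set.infinite_of_injective_forall_mem (f := fun n : ℕ => f^[n] α)
    (fun m n hmn => h m n hmn) (iterate_mem_fcls f α)

lemma nonrange_aper {f : Ω → Ω} (hf : Injective f) {δ : Ω} (hδ : δ ∉ range f) : Aper f δ := by
  intro m n hmn
  by_contra hne
  wlog hlt : m < n generalizing m n
  · exact this n m hmn.symm (Ne.symm hne) (by omega)
  have : δ = f^[n - m] δ := by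
    apply hf.iterate m
    rw [← iterate_add_apply, Nat.add_sub_cancel' hlt.le, hmn]
  have h2 : n - m - 1 + 1 = n - m := by omega
  rw [← h2, iterate_succ_apply'] at this
  exact hδ ⟨f^[n - m - 1] δ, this.symm⟩

lemma nonrange_fcls {f : Ω → Ω} (hf : Injective f) {δ : Ω} (hδ : δ ∉ range f) :
    fcls f δ = {x | ∃ k, f^[k] δ = x} := by
  apply Set.Subset.antisymm
  · rintro γ ⟨a, b, hab⟩
    rcases le_or_gt a b with hab' | hab'
    · refine ⟨b - a, ?_⟩
      apply hf.iterate a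
      rw [← iterate_add_apply, Nat.add_sub_cancel' hab', hab]
    · exfalso
      have : f^[a - b] γ = δ := by
        apply hf.iterate b
        rw [← iterate_add_apply, Nat.add_sub_cancel' hab'.le, hab]
      have h2 : a - b - 1 + 1 = a - b := by omega
      rw [← h2, iterate_succ_apply'] at this
      exact hδ ⟨f^[a - b - 1] γ, this⟩
  · rintro x ⟨k, rfl⟩
    exact iterate_mem_fcls f δ k

lemma nonrange_unique_s9 {f : Ω → Ω} (hf : Injective f) {δ δ' : Ω} (hδ : δ ∉ range f)
    (hδ' : δ' ∉ range f) (h : δ' ∈ fcls f δ) : δ' = δ := by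
  rw [nonrange_fcls hf hδ] at h
  obtain ⟨k, hk⟩ := h
  cases k with
  | zero => exact hk.symm
  | succ i =>
    rw [iterate_succ_apply'] at hk
    exact absurd ⟨f^[i] δ, hk⟩ hδ'

/-- If `f` and `g` agree on the forward `f`-orbit of `β` then the orbits coincide. -/
lemma iterate_eq_of_eqOn_orbit {f g : Ω → Ω} {β : Ω}
    (h : ∀ k : ℕ, f (f^[k] β) = g (f^[k] β)) : ∀ k : ℕ, f^[k] β = g^[k] β := by
  intro k
  induction k with
  | zero => rfl
  | succ i ih => rw [iterate_succ_apply', iterate_succ_apply', ← ih, h i]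

/-- If the forward orbit of `α` is injective, we can go far enough along it
to avoid a finite set forever. -/
lemma exists_tail {f : Ω → Ω} {α : Ω} (hap : Aper f α) {D : Set Ω} (hD : D.Finite) :
    ∃ N : ℕ, ∀ k : ℕ, f^[k] (f^[N] α) ∉ D := by
  have hfin : {n : ℕ | f^[n] α ∈ D}.Finite := by
    apply Set.Finite.preimage (f := fun n : ℕ => f^[n] α) _ hD
    intro m _ n _ hmn
    exact hap m n hmn
  obtain ⟨N, hN⟩ := hfin.bddAbove
  refine ⟨N + 1, fun k hk => ?_⟩
  rw [← iterate_add_apply] at hk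
  have := hN hk
  omega

/-- Transfer: an `f`-cycle on which `f = g`, and which `g` cannot enter from
a disagreement point, is a `g`-cycle. -/
lemma transfer {f g : Ω → Ω} {s : Set Ω} (hs : IsCycleUnder f s)
    (h1 : ∀ x ∈ s, f x = g x) (h2 : ∀ x, f x ≠ g x → g x ∉ s) : IsCycleUnder g s := by
  obtain ⟨α, rfl⟩ := isCycleUnder_iff.mp hs
  have horb : ∀ β ∈ fcls f α, ∀ k : ℕ, f^[k] β = g^[k] β := by
    intro β hβ
    apply iterate_eq_of_eqOn_orbit
    intro k
    exact h1 _ ((iterate_mem_fcls_iff k).mpr hβ)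
  have hback : ∀ m : ℕ, ∀ γ : Ω, g^[m] γ ∈ fcls f α → γ ∈ fcls f α := by
    intro m
    induction m with
    | zero => exact fun γ h => h
    | succ i ih =>
      intro γ h
      rw [iterate_succ_apply] at h
      have hgγ : g γ ∈ fcls f α := ih _ h
      by_cases hd : f γ = g γ
      · rw [← hd] at hgγ
        exact apply_mem_fcls_iff.mp hgγ
      · exact absurd hgγ (h2 γ hd)
  rw [isCycleUnder_iff]
  refine ⟨α, ?_⟩
  apply Set.Subset.antisymm
  · rintro β hβ
    obtain ⟨m, n, hmn⟩ := id hβ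
    refine ⟨m, n, ?_⟩
    rw [← horb β hβ m, ← horb α (mem_fcls_self f α) n, hmn]
  · rintro γ ⟨m, n, hmn⟩
    apply hback m
    rw [hmn, ← horb α (mem_fcls_self f α) n]
    exact iterate_mem_fcls f α n

lemma cycle_transfer {f g : Ω → Ω} {S : Set Ω} (hDS : ∀ x, f x ≠ g x → x ∈ S)
    (hgS : ∀ x, f x ≠ g x → g x ∈ S) {s : Set Ω} (hs : IsCycleUnder f s)
    (hdisj : s ∩ S = ∅) : IsCycleUnder g s := by
  apply transfer hs
  · intro x hx
    by_contra hne
    have hmem : x ∈ s ∩ S := ⟨hx, hDS x hne⟩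
    rw [hdisj] at hmem
    exact hmem
  · intro x hne hmem'
    have hmem : g x ∈ s ∩ S := ⟨hmem', hgS x hne⟩
    rw [hdisj] at hmem
    exact hmem

lemma conj_iterate (k : Ω → Ω) (a : Equiv.Perm Ω) (m : ℕ) (x : Ω) :
    (⇑a ∘ k ∘ ⇑a.symm)^[m] x = a (k^[m] (a.symm x)) := by
  induction m generalizing x with
  | zero => simp
  | succ i ih => rw [iterate_succ_apply, ih]; simp

lemma fcls_conj (k : Ω → Ω) (a : Equiv.Perm Ω) (α : Ω) :
    fcls (⇑a ∘ k ∘ ⇑a.symm) (a α) = a '' fcls k α := by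
  ext γ
  constructor
  · rintro ⟨m, n, hmn⟩
    rw [conj_iterate, conj_iterate] at hmn
    refine ⟨a.symm γ, ⟨m, n, ?_⟩, by simp⟩
    have := a.injective hmn
    simpa using this
  · rintro ⟨x, ⟨m, n, hmn⟩, rfl⟩
    refine ⟨m, n, ?_⟩
    rw [conj_iterate, conj_iterate]
    simp [hmn]

lemma isOpenCycle_image {k : Ω → Ω} (a : Equiv.Perm Ω) {s : Set Ω}
    (h : IsOpenCycle k s) : IsOpenCycle (⇑a ∘ k ∘ ⇑a.symm) (⇑a '' s) := by
  obtain ⟨hc, hinf, hop⟩ := h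
  refine ⟨?_, ?_, ?_⟩
  · obtain ⟨α, rfl⟩ := isCycleUnder_iff.mp hc
    rw [isCycleUnder_iff]
    exact ⟨a α, (fcls_conj k a α).symm⟩
  · exact hinf.image (a.injective.injOn)
  · rw [Set.not_nonempty_iff_eq_empty] at hop ⊢
    have hr : range (⇑a ∘ k ∘ ⇑a.symm) = ⇑a '' range k := by
      rw [Set.range_comp, Set.range_comp]
      simp
    rw [hr, ← Set.image_diff a.injective, hop, Set.image_empty]

lemma copen_conj (k : Ω → Ω) (a : Equiv.Perm Ω) :
    Copen (⇑a ∘ k ∘ ⇑a.symm) = Copen k := by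
  symm
  apply Cardinal.mk_congr
  refine
    { toFun := fun s => ⟨⇑a '' s.1, isOpenCycle_image a s.2⟩
      invFun := fun t => ⟨⇑a.symm '' t.1, ?_⟩
      left_inv := fun s => Subtype.ext (a.symm_image_image s.1)
      right_inv := fun t => Subtype.ext ?_ }
  · have := isOpenCycle_image a.symm t.2
    have heq : (⇑a.symm ∘ (⇑a ∘ k ∘ ⇑a.symm) ∘ ⇑a.symm.symm) = k := by
      funext x; simp
    rwa [heq] at this
  · simp [Set.image_image]

lemma meet_finite {f : Ω → Ω} {S : Set Ω} (hS : S.Finite) :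
    {s : Set Ω | IsCycleUnder f s ∧ (s ∩ S).Nonempty}.Finite := by
  classical
  set M := {s : Set Ω | IsCycleUnder f s ∧ (s ∩ S).Nonempty} with hM
  rcases M.eq_empty_or_nonempty with h | ⟨s₀, hs₀⟩
  · rw [h]; exact Set.finite_empty
  · have : Nonempty Ω := ⟨hs₀.2.choose⟩
    set F : Set Ω → Ω := fun s =>
      if h : (s ∩ S).Nonempty then h.choose else Classical.arbitrary Ω with hF
    apply Set.Finite.of_finite_image (f := F)
    · apply hS.subset
      rintro x ⟨s, hs, rfl⟩
      simp only [hF]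
      rw [dif_pos hs.2]
      exact hs.2.choose_spec.2
    · intro s₁ h₁ s₂ h₂ hFe
      simp only [hF] at hFe
      rw [dif_pos h₁.2, dif_pos h₂.2] at hFe
      have hx1 := h₁.2.choose_spec
      have hx2 := h₂.2.choose_spec
      rw [hFe] at hx1
      calc s₁ = fcls f h₂.2.choose := fcls_eq_of_isCycleUnder h₁.1 hx1.1
        _ = s₂ := (fcls_eq_of_isCycleUnder h₂.1 hx2.1).symm

lemma fm_card {f : Ω → Ω} (hf : Injective f) (S : Set Ω) :
    Nat.card ↥{s : Set Ω | IsCycleUnder f s ∧ s.Infinite ∧ (s \ range f).Nonempty ∧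
        (s ∩ S).Nonempty}
      = Nat.card ↥{δ : Ω | δ ∉ range f ∧ ∃ k, f^[k] δ ∈ S} := by
  symm
  have hφmem : ∀ δ : ↥{δ : Ω | δ ∉ range f ∧ ∃ k, f^[k] δ ∈ S},
      fcls f δ.1 ∈ {s : Set Ω | IsCycleUnder f s ∧ s.Infinite ∧ (s \ range f).Nonempty ∧
        (s ∩ S).Nonempty} := by
    rintro ⟨δ, hδr, k, hk⟩
    exact ⟨isCycleUnder_iff.mpr ⟨δ, rfl⟩, infinite_of_aper (nonrange_aper hf hδr),
      ⟨δ, mem_fcls_self f δ, hδr⟩, ⟨f^[k] δ, iterate_mem_fcls f δ k, hk⟩⟩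
  apply Nat.card_eq_of_bijective (f := fun δ => ⟨fcls f δ.1, hφmem δ⟩)
  constructor
  · rintro ⟨δ₁, h₁⟩ ⟨δ₂, h₂⟩ he
    have : fcls f δ₁ = fcls f δ₂ := congrArg Subtype.val he
    have hmem : δ₁ ∈ fcls f δ₂ := this ▸ mem_fcls_self f δ₁
    exact Subtype.ext (nonrange_unique_s9 hf h₂.1 h₁.1 hmem)
  · rintro ⟨s, hcyc, hinf, ⟨δ, hδs, hδr⟩, hmeet⟩
    have hsd : s = fcls f δ := fcls_eq_of_isCycleUnder hcyc hδs
    have hkk : ∃ k, f^[k] δ ∈ S := by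
      obtain ⟨x, hxs, hxS⟩ := hmeet
      have : x ∈ fcls f δ := hsd ▸ hxs
      rw [nonrange_fcls hf hδr] at this
      obtain ⟨k, hk⟩ := this
      exact ⟨k, hk ▸ hxS⟩
    exact ⟨⟨δ, hδr, hkk⟩, Subtype.ext hsd.symm⟩

lemma im_card_le {f g : Ω → Ω} {S : Set Ω} (hf : Injective f) (hS : S.Finite)
    (hDS : ∀ x, f x ≠ g x → x ∈ S) (hfS : ∀ x, f x ≠ g x → f x ∈ S)
    (hgS : ∀ x, f x ≠ g x → g x ∈ S) :
    Nat.card ↥{s : Set Ω | IsCycleUnder f s ∧ s.Infinite ∧ (s ∩ S).Nonempty}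
      ≤ Nat.card ↥{s : Set Ω | IsCycleUnder g s ∧ s.Infinite ∧ (s ∩ S).Nonempty} := by
  classical
  have hfin : Finite ↥{s : Set Ω | IsCycleUnder g s ∧ s.Infinite ∧ (s ∩ S).Nonempty} := by
    apply Set.Finite.to_subtype
    apply (meet_finite (f := g) hS).subset
    rintro s ⟨h1, _, h3⟩; exact ⟨h1, h3⟩
  have hstep : ∀ s : ↥{s : Set Ω | IsCycleUnder f s ∧ s.Infinite ∧ (s ∩ S).Nonempty},
      ∃ β : Ω, β ∈ s.1 ∧ (∀ k : ℕ, f^[k] β = g^[k] β) ∧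
        fcls g β ∈ {s : Set Ω | IsCycleUnder g s ∧ s.Infinite ∧ (s ∩ S).Nonempty} := by
    rintro ⟨s, hcyc, hinf, hmeet⟩
    obtain ⟨α, hα⟩ := hcyc.1
    have hsα : s = fcls f α := fcls_eq_of_isCycleUnder hcyc hα
    have hap : Aper f α := aper_of_infinite hf (hsα ▸ hinf)
    obtain ⟨N, hN⟩ := exists_tail hap hS
    set β := f^[N] α with hβ
    have hβs : β ∈ s := by rw [hsα]; exact iterate_mem_fcls f α N
    have horb : ∀ k : ℕ, f^[k] β = g^[k] β := by
      apply iterate_eq_of_eqOn_orbit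
      intro k
      by_contra hne
      exact hN k (hDS _ hne)
    have hapβ : Aper f β := by
      have : fcls f β = s := (fcls_eq_of_isCycleUnder hcyc hβs).symm
      exact aper_of_infinite hf (this ▸ hinf)
    have hapg : Aper g β := by
      intro m n hmn
      rw [← horb m, ← horb n] at hmn
      exact hapβ m n hmn
    refine ⟨β, hβs, horb, isCycleUnder_iff.mpr ⟨β, rfl⟩, infinite_of_aper hapg, ?_⟩
    by_contra hmt
    rw [Set.not_nonempty_iff_eq_empty] at hmt
    have hfc : IsCycleUnder f (fcls g β) := by
      apply cycle_transfer (f := g) (g := f) (fun x hx => hDS x (Ne.symm hx))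
        (fun x hx => hfS x (Ne.symm hx)) (isCycleUnder_iff.mpr ⟨β, rfl⟩) hmt
    have h1 : fcls g β = fcls f β := fcls_eq_of_isCycleUnder hfc (mem_fcls_self g β)
    have h2 : s = fcls f β := fcls_eq_of_isCycleUnder hcyc hβs
    have hs0 : s ∩ S = ∅ := by rw [h2, ← h1]; exact hmt
    rw [hs0] at hmeet
    exact Set.not_nonempty_empty hmeet
  choose β hβmem hβorb hβcls using hstep
  apply Nat.card_le_card_of_injective (fun s => ⟨fcls g (β s), hβcls s⟩)
  rintro s₁ s₂ he
  have heq : fcls g (β s₁) = fcls g (β s₂) := congrArg Subtype.val he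
  have hm : β s₂ ∈ fcls g (β s₁) := heq ▸ mem_fcls_self g (β s₂)
  obtain ⟨m, n, hmn⟩ := hm
  rw [← hβorb s₂ m, ← hβorb s₁ n] at hmn
  have hm' : β s₂ ∈ fcls f (β s₁) := ⟨m, n, hmn⟩
  have e1 : s₁.1 = fcls f (β s₁) := fcls_eq_of_isCycleUnder s₁.2.1 (hβmem s₁)
  have e2 : s₂.1 = fcls f (β s₂) := fcls_eq_of_isCycleUnder s₂.2.1 (hβmem s₂)
  apply Subtype.ext
  rw [e1, e2, fcls_eq_of_mem hm']

lemma copen_eq {f g : Ω → Ω} (hf : Injective f) (hg : Injective g)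
    (hr : range f = range g) (hD : {x | f x ≠ g x}.Finite) : Copen f = Copen g := by
  classical
  set S : Set Ω := {x | f x ≠ g x} ∪ f '' {x | f x ≠ g x} ∪ g '' {x | f x ≠ g x} with hSdef
  have hS : S.Finite := ((hD.union (hD.image f)).union (hD.image g))
  have hDS : ∀ x, f x ≠ g x → x ∈ S := fun x hx => Or.inl (Or.inl hx)
  have hfS : ∀ x, f x ≠ g x → f x ∈ S := fun x hx => Or.inl (Or.inr ⟨x, hx, rfl⟩)
  have hgS : ∀ x, f x ≠ g x → g x ∈ S := fun x hx => Or.inr ⟨x, hx, rfl⟩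
  have hDS' : ∀ x, g x ≠ f x → x ∈ S := fun x hx => hDS x (Ne.symm hx)
  have hfS' : ∀ x, g x ≠ f x → f x ∈ S := fun x hx => hfS x (Ne.symm hx)
  have hgS' : ∀ x, g x ≠ f x → g x ∈ S := fun x hx => hgS x (Ne.symm hx)
  -- transfer of open cycles avoiding S
  have hOA : ∀ s : Set Ω, ¬(s ∩ S).Nonempty → (IsOpenCycle f s ↔ IsOpenCycle g s) := by
    intro s hs
    rw [Set.not_nonempty_iff_eq_empty] at hs
    constructor
    · rintro ⟨h1, h2, h3⟩
      exact ⟨cycle_transfer hDS hgS h1 hs, h2, by rwa [← hr]⟩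
    · rintro ⟨h1, h2, h3⟩
      exact ⟨cycle_transfer hDS' hfS' h1 hs, h2, by rwa [hr]⟩
  -- named sets
  set IMf := {s : Set Ω | IsCycleUnder f s ∧ s.Infinite ∧ (s ∩ S).Nonempty} with hIMf
  set IMg := {s : Set Ω | IsCycleUnder g s ∧ s.Infinite ∧ (s ∩ S).Nonempty} with hIMg
  set FMf := {s : Set Ω | IsCycleUnder f s ∧ s.Infinite ∧ (s \ range f).Nonempty ∧
    (s ∩ S).Nonempty} with hFMf
  set FMg := {s : Set Ω | IsCycleUnder g s ∧ s.Infinite ∧ (s \ range g).Nonempty ∧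
    (s ∩ S).Nonempty} with hFMg
  set OMf := {s : Set Ω | IsOpenCycle f s ∧ (s ∩ S).Nonempty} with hOMf
  set OMg := {s : Set Ω | IsOpenCycle g s ∧ (s ∩ S).Nonempty} with hOMg
  set OAf := {s : Set Ω | IsOpenCycle f s ∧ ¬(s ∩ S).Nonempty} with hOAf
  set OAg := {s : Set Ω | IsOpenCycle g s ∧ ¬(s ∩ S).Nonempty} with hOAg
  -- finiteness
  have hfinIMf : IMf.Finite := (meet_finite (f := f) hS).subset (by
    rintro s ⟨h1, _, h3⟩; exact ⟨h1, h3⟩)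
  have hfinIMg : IMg.Finite := (meet_finite (f := g) hS).subset (by
    rintro s ⟨h1, _, h3⟩; exact ⟨h1, h3⟩)
  have hFMsubf : FMf ⊆ IMf := by rintro s ⟨h1, h2, _, h4⟩; exact ⟨h1, h2, h4⟩
  have hFMsubg : FMg ⊆ IMg := by rintro s ⟨h1, h2, _, h4⟩; exact ⟨h1, h2, h4⟩
  have hOMsubf : OMf ⊆ IMf := by rintro s ⟨⟨h1, h2, _⟩, h4⟩; exact ⟨h1, h2, h4⟩
  have hOMsubg : OMg ⊆ IMg := by rintro s ⟨⟨h1, h2, _⟩, h4⟩; exact ⟨h1, h2, h4⟩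
  -- partitions
  have hpartf : IMf = OMf ∪ FMf := by
    ext s
    constructor
    · rintro ⟨h1, h2, h3⟩
      by_cases h4 : (s \ range f).Nonempty
      · exact Or.inr ⟨h1, h2, h4, h3⟩
      · exact Or.inl ⟨⟨h1, h2, h4⟩, h3⟩
    · rintro (⟨⟨h1, h2, _⟩, h4⟩ | ⟨h1, h2, _, h4⟩) <;> exact ⟨h1, h2, h4⟩
  have hpartg : IMg = OMg ∪ FMg := by
    ext s
    constructor
    · rintro ⟨h1, h2, h3⟩
      by_cases h4 : (s \ range g).Nonempty
      · exact Or.inr ⟨h1, h2, h4, h3⟩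
      · exact Or.inl ⟨⟨h1, h2, h4⟩, h3⟩
    · rintro (⟨⟨h1, h2, _⟩, h4⟩ | ⟨h1, h2, _, h4⟩) <;> exact ⟨h1, h2, h4⟩
  have hdisjf : Disjoint OMf FMf := by
    rw [Set.disjoint_left]
    rintro s ⟨⟨_, _, h3⟩, _⟩ ⟨_, _, h3', _⟩
    exact h3 h3'
  have hdisjg : Disjoint OMg FMg := by
    rw [Set.disjoint_left]
    rintro s ⟨⟨_, _, h3⟩, _⟩ ⟨_, _, h3', _⟩
    exact h3 h3'
  have hcardf : IMf.ncard = OMf.ncard + FMf.ncard := by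
    rw [hpartf]
    exact Set.ncard_union_eq hdisjf (hfinIMf.subset hOMsubf) (hfinIMf.subset hFMsubf)
  have hcardg : IMg.ncard = OMg.ncard + FMg.ncard := by
    rw [hpartg]
    exact Set.ncard_union_eq hdisjg (hfinIMg.subset hOMsubg) (hfinIMg.subset hFMsubg)
  -- IM counts agree
  have hIMeq : IMf.ncard = IMg.ncard := by
    rw [← Nat.card_coe_set_eq, ← Nat.card_coe_set_eq]
    exact le_antisymm (im_card_le hf hS hDS hfS hgS) (im_card_le hg hS hDS' hgS' hfS')
  -- FM counts agree
  have hBeq : {δ : Ω | δ ∉ range f ∧ ∃ k, f^[k] δ ∈ S}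
      = {δ : Ω | δ ∉ range g ∧ ∃ k, g^[k] δ ∈ S} := by
    ext δ
    constructor
    · rintro ⟨h1, k, hk⟩
      refine ⟨by rwa [← hr], ?_⟩
      by_contra h
      push_neg at h
      have horb : ∀ j : ℕ, g^[j] δ = f^[j] δ := by
        apply iterate_eq_of_eqOn_orbit
        intro j
        by_contra hne
        exact h j (hDS' _ hne)
      rw [← horb k] at hk
      exact h k hk
    · rintro ⟨h1, k, hk⟩
      refine ⟨by rwa [hr], ?_⟩
      by_contra h
      push_neg at h
      have horb : ∀ j : ℕ, f^[j] δ = g^[j] δ := by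
        apply iterate_eq_of_eqOn_orbit
        intro j
        by_contra hne
        exact h j (hDS _ hne)
      rw [← horb k] at hk
      exact h k hk
  have hFMeq : FMf.ncard = FMg.ncard := by
    rw [← Nat.card_coe_set_eq, ← Nat.card_coe_set_eq, hFMf, hFMg,
      fm_card hf S, fm_card hg S, hBeq]
  have hOMeq : OMf.ncard = OMg.ncard := by omega
  -- split Copen
  have hsplitf : {s : Set Ω | IsOpenCycle f s} = OAf ∪ OMf := by
    ext s
    constructor
    · intro h1
      by_cases h2 : (s ∩ S).Nonempty
      · exact Or.inr ⟨h1, h2⟩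
      · exact Or.inl ⟨h1, h2⟩
    · rintro (⟨h1, _⟩ | ⟨h1, _⟩) <;> exact h1
  have hsplitg : {s : Set Ω | IsOpenCycle g s} = OAg ∪ OMg := by
    ext s
    constructor
    · intro h1
      by_cases h2 : (s ∩ S).Nonempty
      · exact Or.inr ⟨h1, h2⟩
      · exact Or.inl ⟨h1, h2⟩
    · rintro (⟨h1, _⟩ | ⟨h1, _⟩) <;> exact h1
  have hdisjOf : Disjoint OAf OMf := by
    rw [Set.disjoint_left]
    rintro s ⟨_, h2⟩ ⟨_, h2'⟩
    exact h2 h2'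
  have hdisjOg : Disjoint OAg OMg := by
    rw [Set.disjoint_left]
    rintro s ⟨_, h2⟩ ⟨_, h2'⟩
    exact h2 h2'
  have hOAeq : OAf = OAg := by
    ext s
    exact ⟨fun ⟨h1, h2⟩ => ⟨(hOA s h2).mp h1, h2⟩, fun ⟨h1, h2⟩ => ⟨(hOA s h2).mpr h1, h2⟩⟩
  have hmkOM : Cardinal.mk ↥OMf = Cardinal.mk ↥OMg := by
    have f1 : OMf.Finite := hfinIMf.subset hOMsubf
    have f2 : OMg.Finite := hfinIMg.subset hOMsubg
    have := f1.to_subtype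
    have := f2.to_subtype
    have hnc : Nat.card ↥OMf = Nat.card ↥OMg := by
      rw [Nat.card_coe_set_eq, Nat.card_coe_set_eq]; exact hOMeq
    rw [← Cardinal.cast_toNat_of_lt_aleph0 (Cardinal.lt_aleph0_of_finite ↥OMf),
      ← Cardinal.cast_toNat_of_lt_aleph0 (Cardinal.lt_aleph0_of_finite ↥OMg)]
    exact congrArg Nat.cast hnc
  have hCf : Copen f = Cardinal.mk ↥OAf + Cardinal.mk ↥OMf := by
    have : Copen f = Cardinal.mk ↥{s : Set Ω | IsOpenCycle f s} := rfl
    rw [this, hsplitf]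
    exact Cardinal.mk_union_of_disjoint hdisjOf
  have hCg : Copen g = Cardinal.mk ↥OAg + Cardinal.mk ↥OMg := by
    have : Copen g = Cardinal.mk ↥{s : Set Ω | IsOpenCycle g s} := rfl
    rw [this, hsplitg]
    exact Cardinal.mk_union_of_disjoint hdisjOg
  rw [hCf, hCg, hOAeq, hmkOM]

end Stmt9Aux

theorem stmt_9 [Countable Ω] [Infinite Ω] (f : Ω → Ω) (hf : Function.Injective f)
    (h : Equiv.Perm Ω) (hfin : Finitary h) :
    Copen f = Copen (f ∘ ⇑h) ∧ Copen f = Copen (⇑h ∘ f) := by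
  have h1 : Copen f = Copen (f ∘ ⇑h) := by
    apply copen_eq hf (hf.comp h.injective)
    · rw [Set.range_comp, Equiv.range_eq_univ, Set.image_univ]
    · apply hfin.subset
      intro x hx he
      exact hx (by rw [Function.comp_apply, he])
  refine ⟨h1, ?_⟩
  have h2 : (⇑h ∘ f) = ⇑h ∘ (f ∘ ⇑h) ∘ ⇑h.symm := by
    funext x; simp
  rw [h1, h2, copen_conj (f ∘ ⇑h) h]
end

section
/- Let f, g ∈ Inj(Ω), and suppose that f = h h₁ g h₂ h⁻¹ for some h ∈ Sym(Ω) and h₁, h₂ ∈ Fin(Ω). Then f ≈_fin g. -/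
open Cardinal Function Set

universe u
variable {Ω : Type u}

section proof_aux

namespace Stmt10Aux

variable {Ω : Type u} {f g : Ω → Ω}

lemma iter_mem_iff {t : Set Ω} (ht : ∀ α, f α ∈ t ↔ α ∈ t) (n : ℕ) (α : Ω) :
    f^[n] α ∈ t ↔ α ∈ t := by
  induction n generalizing α with
  | zero => simp
  | succ n ih => rw [Function.iterate_succ_apply, ih, ht]

lemma cycle_eq_of_mem {s t : Set Ω} (hs : IsCycleUnder f s) (ht : IsCycleUnder f t)
    {x : Ω} (hxs : x ∈ s) (hxt : x ∈ t) : s = t := by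
  have hinv : ∀ α, f α ∈ s ∩ t ↔ α ∈ s ∩ t := fun α => by
    rw [Set.mem_inter_iff, Set.mem_inter_iff, hs.2.1, ht.2.1]
  have h1 := hs.2.2 (s ∩ t) Set.inter_subset_left ⟨x, hxs, hxt⟩ hinv
  have h2 := ht.2.2 (s ∩ t) Set.inter_subset_right ⟨x, hxs, hxt⟩ hinv
  rw [← h1, h2]

lemma cycle_finite_of_periodic (hf : Function.Injective f) {s : Set Ω}
    (hs : IsCycleUnder f s) {w : Ω} (hw : w ∈ s) {d : ℕ} (hd : 0 < d)
    (hper : f^[d] w = w) : s.Finite := by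
  obtain ⟨e, rfl⟩ : ∃ e, d = e + 1 := ⟨d - 1, by omega⟩
  set P : Set Ω := Set.range (fun n : ℕ => f^[n] w) with hP
  have hPs : P ⊆ s := by rintro _ ⟨n, rfl⟩; exact (iter_mem_iff hs.2.1 n w).mpr hw
  have hPinv : ∀ α, f α ∈ P ↔ α ∈ P := by
    intro α
    constructor
    · rintro ⟨n, hn⟩
      match n, hn with
      | 0, hn =>
        exact ⟨e, hf (((Function.iterate_succ_apply' f e w).symm.trans hper).trans hn)⟩
      | (m+1), hn =>
        exact ⟨m, hf ((Function.iterate_succ_apply' f m w).symm.trans hn)⟩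
    · rintro ⟨n, rfl⟩; exact ⟨n+1, (Function.iterate_succ_apply' f n w : _)⟩
  have hPeq : P = s := hs.2.2 P hPs ⟨w, ⟨0, rfl⟩⟩ hPinv
  rw [← hPeq]
  apply Set.Finite.subset ((Set.finite_Iio (e+1)).image fun n => f^[n] w)
  rintro _ ⟨n, rfl⟩
  have hper' : Function.IsPeriodicPt f (e+1) w := hper
  exact ⟨n % (e+1), Nat.mod_lt _ (by omega), hper'.iterate_mod_apply n⟩

/-- The forward orbit of a point. -/
def fOrbit (f : Ω → Ω) (a : Ω) : Set Ω := Set.range fun n : ℕ => f^[n] a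

lemma iterate_inj_exp (hf : Function.Injective f) {a : Ω} (ha : a ∉ Set.range f)
    {p q : ℕ} (h : f^[p] a = f^[q] a) : p = q := by
  by_contra hne
  wlog hlt : p < q generalizing p q
  · exact this h.symm (Ne.symm hne) (by omega)
  have h2 : f^[p] (f^[q - p] a) = f^[p] a := by
    rw [← Function.iterate_add_apply]
    rw [show p + (q - p) = q by omega, h]
  have h3 : f^[q - p] a = a := hf.iterate p h2
  obtain ⟨r, hr⟩ : ∃ r, q - p = r + 1 := ⟨q - p - 1, by omega⟩
  rw [hr, Function.iterate_succ_apply'] at h3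
  exact ha ⟨f^[r] a, h3⟩

lemma orbit_cycle (hf : Function.Injective f) {a : Ω} (ha : a ∉ Set.range f) :
    IsCycleUnder f (fOrbit f a) := by
  refine ⟨⟨a, ⟨0, rfl⟩⟩, ?_, ?_⟩
  · intro α
    constructor
    · rintro ⟨n, hn⟩
      match n, hn with
      | 0, hn =>
        simp only [Function.iterate_zero, id_eq] at hn
        exact absurd ⟨α, hn.symm⟩ ha
      | (m+1), hn =>
        exact ⟨m, hf ((Function.iterate_succ_apply' f m a).symm.trans hn)⟩
    · rintro ⟨n, rfl⟩; exact ⟨n+1, (Function.iterate_succ_apply' f n a : _)⟩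
  · intro t hts htne htinv
    obtain ⟨β, hβ⟩ := htne
    obtain ⟨n, rfl⟩ := hts hβ
    have haT : a ∈ t := (iter_mem_iff htinv n a).mp hβ
    apply Set.Subset.antisymm hts
    rintro _ ⟨m, rfl⟩
    exact (iter_mem_iff htinv m a).mpr haT

lemma orbit_infinite (hf : Function.Injective f) {a : Ω} (ha : a ∉ Set.range f) :
    (fOrbit f a).Infinite :=
  Set.infinite_range_of_injective fun p q h => iterate_inj_exp hf ha h

lemma cycle_eq_orbit (hf : Function.Injective f) {s : Set Ω} (hs : IsCycleUnder f s) {a : Ω}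
    (has : a ∈ s) (ha : a ∉ Set.range f) : s = fOrbit f a := by
  have hsub : fOrbit f a ⊆ s := by
    rintro _ ⟨n, rfl⟩; exact (iter_mem_iff hs.2.1 n a).mpr has
  exact (hs.2.2 (fOrbit f a) hsub ⟨a, ⟨0, rfl⟩⟩ (orbit_cycle hf ha).2.1).symm

lemma isForwardCycle_orbit (hf : Function.Injective f) {a : Ω} (ha : a ∉ Set.range f) :
    IsForwardCycle f (fOrbit f a) :=
  ⟨orbit_cycle hf ha, orbit_infinite hf ha, ⟨a, ⟨0, rfl⟩, ha⟩⟩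

lemma cfwd_eq_coim (hf : Function.Injective f) : Cfwd f = coim f := by
  symm
  unfold Cfwd coim
  refine Cardinal.mk_congr (Equiv.ofBijective
    (fun a => ⟨fOrbit f a.1, isForwardCycle_orbit hf a.2⟩) ⟨?_, ?_⟩)
  · intro a b hab
    have heq : fOrbit f (a : Ω) = fOrbit f (b : Ω) := congrArg Subtype.val hab
    have h1 : (a : Ω) ∈ fOrbit f (b : Ω) := by rw [← heq]; exact ⟨0, rfl⟩
    obtain ⟨n, hn⟩ := h1
    match n, hn with
    | 0, hn => exact Subtype.ext hn.symm
    | (m+1), hn =>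
      exact absurd ⟨f^[m] (b : Ω), (Function.iterate_succ_apply' f m (b : Ω)).symm.trans hn⟩ a.2
  · rintro ⟨s, hcyc, hinf, a, has, ha⟩
    exact ⟨⟨a, ha⟩, Subtype.ext (cycle_eq_orbit hf hcyc has ha).symm⟩


lemma coim_eq (hf : Function.Injective f) (hg : Function.Injective g)
    (hfg : {x | f x ≠ g x}.Finite) : coim f = coim g := by
  classical
  set S := {x | f x ≠ g x} with hSdef
  set F := f '' S ∪ g '' S with hFdef
  have hFfin : F.Finite := (hfg.image f).union (hfg.image g)
  have hrange : ∀ x ∉ F, (x ∈ Set.range f ↔ x ∈ Set.range g) := by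
    intro x hxF
    constructor
    · rintro ⟨y, rfl⟩
      by_cases hy : y ∈ S
      · exact absurd (Set.mem_union_left _ (Set.mem_image_of_mem f hy)) hxF
      · exact ⟨y, (not_not.mp hy).symm⟩
    · rintro ⟨y, rfl⟩
      by_cases hy : y ∈ S
      · exact absurd (Set.mem_union_right _ (Set.mem_image_of_mem g hy)) hxF
      · exact ⟨y, not_not.mp hy⟩
  have hmk : ∀ u : Ω → Ω, (Set.range u)ᶜ = ((Set.range u)ᶜ \ F) ∪ (F \ Set.range u) := by
    intro u; ext x; by_cases hx : x ∈ F <;> simp [hx]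
  have hdisj : ∀ u : Ω → Ω, Disjoint ((Set.range u)ᶜ \ F) (F \ Set.range u) :=
    fun u => Set.disjoint_left.mpr fun x hx hx2 => hx.2 hx2.1
  have hpart1 : (Set.range f)ᶜ \ F = (Set.range g)ᶜ \ F := by
    ext x
    simp only [Set.mem_diff, Set.mem_compl_iff]
    constructor
    · rintro ⟨h1, h2⟩; exact ⟨fun hr => h1 ((hrange x h2).mpr hr), h2⟩
    · rintro ⟨h1, h2⟩; exact ⟨fun hr => h1 ((hrange x h2).mp hr), h2⟩
  have himg : f '' Sᶜ = g '' Sᶜ := Set.image_congr fun x hx => not_not.mp hx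
  have hdisj2 : Disjoint (f '' S) (F ∩ g '' Sᶜ) := by
    refine Set.disjoint_of_subset_right Set.inter_subset_right ?_
    rw [← himg]
    exact (Set.disjoint_image_iff hf).mpr disjoint_compl_right
  have hdisj3 : Disjoint (g '' S) (F ∩ g '' Sᶜ) := by
    refine Set.disjoint_of_subset_right Set.inter_subset_right ?_
    exact (Set.disjoint_image_iff hg).mpr disjoint_compl_right
  have hif : F ∩ Set.range f = f '' S ∪ (F ∩ g '' Sᶜ) := by
    ext x
    constructor
    · rintro ⟨hxF, y, rfl⟩
      by_cases hy : y ∈ S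
      · exact Or.inl (Set.mem_image_of_mem f hy)
      · exact Or.inr ⟨hxF, ⟨y, hy, (not_not.mp hy).symm⟩⟩
    · rintro (⟨y, hy, rfl⟩ | ⟨hxF, y, hy, rfl⟩)
      · exact ⟨Set.mem_union_left _ (Set.mem_image_of_mem f hy), ⟨y, rfl⟩⟩
      · exact ⟨hxF, ⟨y, not_not.mp hy⟩⟩
  have hig : F ∩ Set.range g = g '' S ∪ (F ∩ g '' Sᶜ) := by
    ext x
    constructor
    · rintro ⟨hxF, y, rfl⟩
      by_cases hy : y ∈ S
      · exact Or.inl (Set.mem_image_of_mem g hy)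
      · exact Or.inr ⟨hxF, ⟨y, hy, rfl⟩⟩
    · rintro (⟨y, hy, rfl⟩ | ⟨hxF, y, hy, rfl⟩)
      · exact ⟨Set.mem_union_right _ (Set.mem_image_of_mem g hy), ⟨y, rfl⟩⟩
      · exact ⟨hxF, ⟨y, rfl⟩⟩
  have hcard : (F ∩ Set.range f).ncard = (F ∩ Set.range g).ncard := by
    rw [hif, hig, Set.ncard_union_eq hdisj2 (hfg.image f) (hFfin.inter_of_left _),
      Set.ncard_union_eq hdisj3 (hfg.image g) (hFfin.inter_of_left _),
      Set.ncard_image_of_injective S hf, Set.ncard_image_of_injective S hg]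
  have hc : (F \ Set.range f).ncard = (F \ Set.range g).ncard := by
    rw [← Set.diff_self_inter (s := F) (t := Set.range f),
        ← Set.diff_self_inter (s := F) (t := Set.range g),
        Set.ncard_diff Set.inter_subset_left (hFfin.inter_of_left _),
        Set.ncard_diff Set.inter_subset_left (hFfin.inter_of_left _), hcard]
  unfold coim
  rw [hmk f, hmk g, Cardinal.mk_union_of_disjoint (hdisj f),
    Cardinal.mk_union_of_disjoint (hdisj g), hpart1]
  congr 1
  have i1 : Finite ↥(F \ Set.range f) := hFfin.diff.to_subtype
  have i2 : Finite ↥(F \ Set.range g) := hFfin.diff.to_subtype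
  rw [← Nat.cast_card (α := ↥(F \ Set.range f)),
    ← Nat.cast_card (α := ↥(F \ Set.range g)),
    Nat.card_coe_set_eq, Nat.card_coe_set_eq, hc]

/-- The component of a point: all points sharing a common forward iterate. -/
def fComp (g : Ω → Ω) (x : Ω) : Set Ω := {β | ∃ m n : ℕ, g^[m] β = g^[n] x}

lemma fComp_cycle (g : Ω → Ω) (x : Ω) : IsCycleUnder g (fComp g x) := by
  refine ⟨⟨x, 0, 0, rfl⟩, ?_, ?_⟩
  · intro α
    constructor
    · rintro ⟨m, n, hmn⟩
      exact ⟨m + 1, n, (Function.iterate_succ_apply g m α).trans hmn⟩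
    · rintro ⟨m, n, hmn⟩
      refine ⟨m, n + 1, ?_⟩
      calc g^[m] (g α) = g (g^[m] α) := by
            rw [← Function.iterate_succ_apply, Function.iterate_succ_apply']
        _ = g (g^[n] x) := by rw [hmn]
        _ = g^[n+1] x := (Function.iterate_succ_apply' g n x).symm
  · intro t hts htne htinv
    obtain ⟨β, hβ⟩ := htne
    obtain ⟨m, n, hmn⟩ := hts hβ
    have hx : x ∈ t := by
      have h1 : g^[m] β ∈ t := (iter_mem_iff htinv m β).mpr hβ
      rw [hmn] at h1
      exact (iter_mem_iff htinv n x).mp h1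
    apply Set.Subset.antisymm hts
    rintro γ ⟨a, b, hab⟩
    have h2 : g^[b] x ∈ t := (iter_mem_iff htinv b x).mpr hx
    rw [← hab] at h2
    exact (iter_mem_iff htinv a γ).mp h2

lemma backward_ray (hf : Function.Injective f) {s : Set Ω} (ho : IsOpenCycle f s) :
    ∃ y : ℕ → Ω, (∀ n, y n ∈ s) ∧ Function.Injective y ∧ ∀ n, f (y (n+1)) = y n := by
  classical
  obtain ⟨hs, hinf, hnof⟩ := ho
  have hsub : s ⊆ Set.range f := by
    intro x hx
    by_contra hxr
    exact hnof ⟨x, hx, hxr⟩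
  have hpre : ∀ x : ↥s, ∃ y : ↥s, f y = (x : Ω) := by
    rintro ⟨x, hx⟩
    obtain ⟨w, hw⟩ := hsub hx
    exact ⟨⟨w, (hs.2.1 w).mp (hw.symm ▸ hx)⟩, hw⟩
  choose F hF using hpre
  obtain ⟨x0, hx0⟩ := hs.1
  set Y : ℕ → ↥s := fun n => F^[n] ⟨x0, hx0⟩ with hY
  have hstep : ∀ n, f ((Y (n+1) : Ω)) = (Y n : Ω) := by
    intro n
    have h1 : Y (n+1) = F (Y n) := Function.iterate_succ_apply' F n _
    rw [h1, hF]
  have hiter : ∀ k, f^[k] ((Y k : Ω)) = (Y 0 : Ω) := by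
    intro k
    induction k with
    | zero => rfl
    | succ k ih =>
      rw [Function.iterate_succ_apply, hstep k]
      exact ih
  have haux : ∀ i j, i < j → (Y i : Ω) = (Y j : Ω) → False := by
    intro i j hij hYij
    have h1 : f^[i] ((Y i : Ω)) = f^[j] ((Y i : Ω)) := by
      rw [hiter i, hYij, hiter j]
    have h2 : f^[i] (f^[j - i] ((Y i : Ω))) = f^[i] ((Y i : Ω)) := by
      rw [← Function.iterate_add_apply, show i + (j - i) = j by omega, ← h1]
    have h3 : f^[j - i] ((Y i : Ω)) = (Y i : Ω) := hf.iterate i h2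
    exact hinf (cycle_finite_of_periodic hf hs (Y i).2 (show 0 < j - i by omega) h3)
  refine ⟨fun n => (Y n : Ω), fun n => (Y n).2, ?_, hstep⟩
  intro i j hij
  rcases Nat.lt_trichotomy i j with hlt | heq | hgt
  · exact absurd (haux i j hlt hij) not_false
  · exact heq
  · exact absurd (haux j i hgt hij.symm) not_false

lemma isOpenCycle_comp (hg : Function.Injective g) {z : ℕ → Ω}
    (hzinj : Function.Injective z) (hray : ∀ n, g (z (n+1)) = z n) :
    IsOpenCycle g (fComp g (z 0)) := by
  have hiter : ∀ k, g^[k] (z k) = z 0 := by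
    intro k
    induction k with
    | zero => rfl
    | succ k ih =>
      rw [Function.iterate_succ_apply, hray k]
      exact ih
  have hzmem : ∀ n, z n ∈ fComp g (z 0) := fun n => ⟨n, 0, hiter n⟩
  refine ⟨fComp_cycle g (z 0), Set.infinite_of_injective_forall_mem hzinj hzmem, ?_⟩
  rintro ⟨a, haC, har⟩
  have heqo : fComp g (z 0) = fOrbit g a := cycle_eq_orbit hg (fComp_cycle g (z 0)) haC har
  have hk : ∀ n, ∃ k, g^[k] a = z n := by
    intro n
    have := hzmem n
    rw [heqo] at this
    exact this
  obtain ⟨k0, hk0⟩ := hk 0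
  obtain ⟨k1, hk1⟩ := hk (k0 + 1)
  have hcalc : g^[k0 + 1 + k1] a = g^[k0] a := by
    rw [Function.iterate_add_apply, hk1, hiter (k0+1), ← hk0]
  have := iterate_inj_exp hg har hcalc
  omega

lemma copen_le (hf : Function.Injective f) (hg : Function.Injective g)
    (hfg : {x | f x ≠ g x}.Finite) : Copen f ≤ Copen g := by
  classical
  have H : ∀ s : {s : Set Ω // IsOpenCycle f s}, ∃ z : ℕ → Ω,
      (∀ n, z n ∈ s.1) ∧ Function.Injective z ∧ ∀ n, g (z (n+1)) = z n := by
    intro s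
    obtain ⟨y, hy1, hy2, hy3⟩ := backward_ray hf s.2
    have hfin : {n : ℕ | y n ∈ {x | f x ≠ g x}}.Finite := hfg.preimage hy2.injOn
    obtain ⟨B, hB⟩ := hfin.bddAbove
    refine ⟨fun n => y (B + 1 + n), fun n => hy1 _,
      fun a b hab => by have := hy2 hab; omega, ?_⟩
    intro n
    have hnS : y (B + 1 + (n+1)) ∉ {x | f x ≠ g x} := by
      intro hmem
      exact absurd (hB hmem) (by omega)
    have heq : f (y (B+1+(n+1))) = g (y (B+1+(n+1))) := not_not.mp hnS
    rw [← heq, show B + 1 + (n+1) = (B+1+n) + 1 by omega, hy3]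
  choose z hz1 hz2 hz3 using H
  have hopen : ∀ s, IsOpenCycle g (fComp g (z s 0)) := fun s =>
    isOpenCycle_comp hg (hz2 s) (hz3 s)
  have hiter : ∀ s (k : ℕ), g^[k] (z s k) = z s 0 := by
    intro s k
    induction k with
    | zero => rfl
    | succ k ih =>
      rw [Function.iterate_succ_apply, hz3 s k]
      exact ih
  refine Cardinal.mk_le_of_injective
    (f := fun s => (⟨fComp g (z s 0), hopen s⟩ : {s : Set Ω // IsOpenCycle g s})) ?_
  intro s₁ s₂ hteq
  have hset : fComp g (z s₁ 0) = fComp g (z s₂ 0) := congrArg Subtype.val hteq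
  have hm : z s₂ 0 ∈ fComp g (z s₁ 0) := by rw [hset]; exact ⟨0, 0, rfl⟩
  obtain ⟨m, n, hmn⟩ := hm
  have l1 : g^[m + n] (z s₂ n) = g^[n] (z s₁ 0) := by
    rw [Function.iterate_add_apply, hiter s₂ n, hmn]
  have l2 : g^[m + n] (z s₁ m) = g^[n] (z s₁ 0) := by
    rw [add_comm, Function.iterate_add_apply, hiter s₁ m]
  have hzz : z s₂ n = z s₁ m := hg.iterate (m + n) (l1.trans l2.symm)
  refine Subtype.ext (cycle_eq_of_mem s₁.2.1 s₂.2.1 (hz1 s₁ m) ?_)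
  rw [← hzz]
  exact hz1 s₂ n


lemma inter_nonempty_of_not {s D : Set Ω} (h : ¬(∀ x ∈ s, x ∉ D)) : (s ∩ D).Nonempty := by
  push_neg at h
  obtain ⟨x, hx1, hx2⟩ := h
  exact ⟨x, hx1, hx2⟩

lemma mk_split {α : Type u} (p q : α → Prop) :
    Cardinal.mk {a // p a} =
      Cardinal.mk {a // p a ∧ q a} + Cardinal.mk {a // p a ∧ ¬ q a} := by
  rw [← Cardinal.mk_sum_compl {x : {a // p a} | q x.1}]
  congr 1
  · exact Cardinal.mk_congr (Equiv.subtypeSubtypeEquivSubtypeInter p q)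
  · exact Cardinal.mk_congr (Equiv.subtypeSubtypeEquivSubtypeInter p fun a => ¬ q a)

lemma meet_finite (f : Ω → Ω) {D : Set Ω} (hD : D.Finite) :
    {s : Set Ω | IsCycleUnder f s ∧ (s ∩ D).Nonempty}.Finite := by
  classical
  rw [← Set.finite_coe_iff]
  have : Finite ↥D := hD.to_subtype
  refine Finite.of_injective
    (fun s => (⟨s.2.2.choose, s.2.2.choose_spec.2⟩ : ↥D)) ?_
  intro s t hst
  have hx : s.2.2.choose = t.2.2.choose := congrArg Subtype.val hst
  refine Subtype.ext (cycle_eq_of_mem s.2.1 t.2.1 s.2.2.choose_spec.1 ?_)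
  rw [hx]
  exact t.2.2.choose_spec.1

lemma cycle_of_agree {S D : Set Ω} (hS : ∀ x, x ∉ S → f x = g x)
    (hSD : S ⊆ D) (hfD : ∀ x ∈ S, f x ∈ D) (hgD : ∀ x ∈ S, g x ∈ D)
    {s : Set Ω} (hdisj : ∀ x ∈ s, x ∉ D) (hs : IsCycleUnder f s) : IsCycleUnder g s := by
  obtain ⟨hne, hinv, hmin⟩ := hs
  refine ⟨hne, ?_, ?_⟩
  · intro α
    by_cases hα : α ∈ S
    · exact iff_of_false (fun h => hdisj _ h (hgD _ hα)) (fun h => hdisj _ h (hSD hα))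
    · rw [← hS _ hα]
      exact hinv α
  · intro t hts htne htinv
    apply hmin t hts htne
    intro α
    by_cases hα : α ∈ S
    · exact iff_of_false (fun h => hdisj _ (hts h) (hfD _ hα))
        (fun h => hdisj _ (hts h) (hSD hα))
    · rw [hS _ hα]
      exact htinv α

lemma cn_pieces (hf : Function.Injective f) (hg : Function.Injective g)
    (hfg : {x | f x ≠ g x}.Finite) :
    {n : ℕ | 0 < n ∧ Cn f n ≠ Cn g n}.Finite ∧
      ∀ n : ℕ, Cn f n ≠ Cn g n → Cn f n < ℵ₀ ∧ Cn g n < ℵ₀ := by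
  classical
  set S := {x | f x ≠ g x} with hSdef
  set D := S ∪ (f '' S ∪ g '' S) with hDdef
  have hD : D.Finite := hfg.union ((hfg.image f).union (hfg.image g))
  have hSD : S ⊆ D := Set.subset_union_left
  have hfD : ∀ x ∈ S, f x ∈ D := fun x hx =>
    Set.mem_union_right _ (Set.mem_union_left _ (Set.mem_image_of_mem f hx))
  have hgD : ∀ x ∈ S, g x ∈ D := fun x hx =>
    Set.mem_union_right _ (Set.mem_union_right _ (Set.mem_image_of_mem g hx))
  have hagree : ∀ s : Set Ω, (∀ x ∈ s, x ∉ D) → (IsCycleUnder f s ↔ IsCycleUnder g s) := by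
    intro s hd
    constructor
    · exact cycle_of_agree (fun x hx => not_not.mp hx) hSD hfD hgD hd
    · refine cycle_of_agree (S := S) (fun x hx => (not_not.mp hx).symm) hSD hgD hfD hd
  have hsplit : ∀ (u : Ω → Ω) (n : ℕ), Cn u n =
      Cardinal.mk {s : Set Ω // (IsCycleUnder u s ∧ Cardinal.mk ↥s = (n : Cardinal)) ∧ (∀ x ∈ s, x ∉ D)}
      + Cardinal.mk {s : Set Ω // (IsCycleUnder u s ∧ Cardinal.mk ↥s = (n : Cardinal)) ∧ ¬(∀ x ∈ s, x ∉ D)} :=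
    fun u n => mk_split _ _
  have havoid : ∀ n : ℕ,
      Cardinal.mk {s : Set Ω // (IsCycleUnder f s ∧ Cardinal.mk ↥s = (n : Cardinal)) ∧ (∀ x ∈ s, x ∉ D)}
      = Cardinal.mk {s : Set Ω // (IsCycleUnder g s ∧ Cardinal.mk ↥s = (n : Cardinal)) ∧ (∀ x ∈ s, x ∉ D)} := by
    intro n
    refine Cardinal.mk_congr (Equiv.subtypeEquivRight ?_)
    intro s
    constructor
    · rintro ⟨⟨hc, hm⟩, hd⟩
      exact ⟨⟨(hagree s hd).mp hc, hm⟩, hd⟩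
    · rintro ⟨⟨hc, hm⟩, hd⟩
      exact ⟨⟨(hagree s hd).mpr hc, hm⟩, hd⟩
  have hmeet : ∀ (u : Ω → Ω), Function.Injective u → ∀ n : ℕ,
      Cardinal.mk {s : Set Ω // (IsCycleUnder u s ∧ Cardinal.mk ↥s = (n : Cardinal)) ∧ ¬(∀ x ∈ s, x ∉ D)} < ℵ₀ := by
    intro u hu n
    have hfin : Finite ↥{s : Set Ω | IsCycleUnder u s ∧ (s ∩ D).Nonempty} :=
      Set.finite_coe_iff.mpr (meet_finite u hD)
    have hinj : Function.Injective
        (fun s : {s : Set Ω // (IsCycleUnder u s ∧ Cardinal.mk ↥s = (n : Cardinal)) ∧ ¬(∀ x ∈ s, x ∉ D)} =>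
          (⟨s.1, s.2.1.1, inter_nonempty_of_not s.2.2⟩ :
            ↥{s : Set Ω | IsCycleUnder u s ∧ (s ∩ D).Nonempty})) := by
      intro a b hab
      have h2 := congrArg
        (fun t : ↥{s : Set Ω | IsCycleUnder u s ∧ (s ∩ D).Nonempty} => (t : Set Ω)) hab
      exact Subtype.ext h2
    have : Finite {s : Set Ω // (IsCycleUnder u s ∧ Cardinal.mk ↥s = (n : Cardinal)) ∧ ¬(∀ x ∈ s, x ∉ D)} :=
      Finite.of_injective _ hinj
    exact Cardinal.lt_aleph0_of_finite _
  constructor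
  · apply Set.Finite.subset
      (((meet_finite f hD).union (meet_finite g hD)).image
        fun s : Set Ω => Cardinal.toNat (Cardinal.mk ↥s))
    intro n hn
    have hne := hn.2
    rw [hsplit f n, hsplit g n, havoid n] at hne
    have hone : ¬ (Cardinal.mk {s : Set Ω // (IsCycleUnder f s ∧ Cardinal.mk ↥s = (n : Cardinal)) ∧ ¬(∀ x ∈ s, x ∉ D)} = 0
        ∧ Cardinal.mk {s : Set Ω // (IsCycleUnder g s ∧ Cardinal.mk ↥s = (n : Cardinal)) ∧ ¬(∀ x ∈ s, x ∉ D)} = 0) := by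
      rintro ⟨e1, e2⟩
      rw [e1, e2] at hne
      exact hne rfl
    rcases not_and_or.mp hone with hne0 | hne0
    · obtain ⟨s, ⟨hc, hm⟩, hd⟩ := Cardinal.mk_ne_zero_iff.mp hne0
      push_neg at hd
      obtain ⟨x, hx1, hx2⟩ := hd
      refine ⟨s, Or.inl ⟨hc, ⟨x, hx1, hx2⟩⟩, ?_⟩
      show Cardinal.toNat (Cardinal.mk ↥s) = n
      rw [hm]
      exact Cardinal.toNat_natCast n
    · obtain ⟨s, ⟨hc, hm⟩, hd⟩ := Cardinal.mk_ne_zero_iff.mp hne0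
      push_neg at hd
      obtain ⟨x, hx1, hx2⟩ := hd
      refine ⟨s, Or.inr ⟨hc, ⟨x, hx1, hx2⟩⟩, ?_⟩
      show Cardinal.toNat (Cardinal.mk ↥s) = n
      rw [hm]
      exact Cardinal.toNat_natCast n
  · intro n hne
    have hmf := hmeet f hf n
    have hmg := hmeet g hg n
    have hA : Cardinal.mk {s : Set Ω // (IsCycleUnder g s ∧ Cardinal.mk ↥s = (n : Cardinal)) ∧ (∀ x ∈ s, x ∉ D)} < ℵ₀ := by
      by_contra hinfA
      push_neg at hinfA
      apply hne
      rw [hsplit f n, hsplit g n, havoid n,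
        Cardinal.add_eq_left hinfA (hmf.le.trans hinfA),
        Cardinal.add_eq_left hinfA (hmg.le.trans hinfA)]
    constructor
    · rw [hsplit f n, havoid n]
      exact Cardinal.add_lt_aleph0 hA hmf
    · rw [hsplit g n]
      exact Cardinal.add_lt_aleph0 hA hmg


lemma finEquiv_of_finite_diff (hf : Function.Injective f) (hg : Function.Injective g)
    (hfg : {x | f x ≠ g x}.Finite) : FinEquiv f g := by
  have hgf : {x | g x ≠ f x}.Finite := hfg.subset fun x hx => Ne.symm hx
  obtain ⟨hbad, hfin⟩ := cn_pieces hf hg hfg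
  exact ⟨le_antisymm (copen_le hf hg hfg) (copen_le hg hf hgf),
    (cfwd_eq_coim hf).trans ((coim_eq hf hg hfg).trans (cfwd_eq_coim hg).symm),
    hbad, fun n _ hne => hfin n hne⟩

lemma conj_cycle (q : Equiv.Perm Ω) {s : Set Ω} (hs : IsCycleUnder f s) :
    IsCycleUnder (⇑q ∘ f ∘ ⇑q.symm) (⇑q '' s) := by
  obtain ⟨hne, hinv, hmin⟩ := hs
  have hmem : ∀ (t : Set Ω) (x : Ω), x ∈ ⇑q '' t ↔ q.symm x ∈ t := by
    intro t x
    constructor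
    · rintro ⟨y, hy, rfl⟩; simpa using hy
    · intro hx; exact ⟨q.symm x, hx, by simp⟩
  refine ⟨hne.image _, ?_, ?_⟩
  · intro β
    rw [hmem, hmem]
    show q.symm (q (f (q.symm β))) ∈ s ↔ _
    rw [Equiv.symm_apply_apply]
    exact hinv _
  · intro t hts htne htinv
    have h1 : ⇑q.symm '' t ⊆ s := by
      rintro _ ⟨y, hy, rfl⟩
      have h := hts hy
      rw [hmem] at h
      exact h
    have hm2 : ∀ x, x ∈ ⇑q.symm '' t ↔ q x ∈ t := by
      intro x
      constructor
      · rintro ⟨y, hy, rfl⟩; simpa using hy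
      · intro hx; exact ⟨q x, hx, by simp⟩
    have h3 : ∀ α, f α ∈ ⇑q.symm '' t ↔ α ∈ ⇑q.symm '' t := by
      intro α
      rw [hm2, hm2]
      have h := htinv (q α)
      have he : (⇑q ∘ f ∘ ⇑q.symm) (q α) = q (f α) := by simp
      rwa [he] at h
    have h4 := hmin _ h1 (htne.image _) h3
    rw [← h4, ← Set.image_comp]
    simp

lemma conj_counts (q : Equiv.Perm Ω) (f : Ω → Ω) :
    (∀ n : ℕ, Cn (⇑q ∘ f ∘ ⇑q.symm) n = Cn f n) ∧
      Copen (⇑q ∘ f ∘ ⇑q.symm) = Copen f ∧ Cfwd (⇑q ∘ f ∘ ⇑q.symm) = Cfwd f := by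
  have hiff : ∀ s : Set Ω, IsCycleUnder f s ↔ IsCycleUnder (⇑q ∘ f ∘ ⇑q.symm) (⇑q '' s) := by
    intro s
    constructor
    · exact conj_cycle q
    · intro hk
      have h := conj_cycle (f := ⇑q ∘ f ∘ ⇑q.symm) q.symm hk
      have e1 : ⇑q.symm ∘ (⇑q ∘ f ∘ ⇑q.symm) ∘ ⇑q.symm.symm = f := by
        funext x; simp
      have e2 : ⇑q.symm '' (⇑q '' s) = s := by
        rw [← Set.image_comp]; simp
      rwa [e1, e2] at h
  have hrange : Set.range (⇑q ∘ f ∘ ⇑q.symm) = ⇑q '' Set.range f := by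
    have h1 : Set.range (⇑q ∘ f ∘ ⇑q.symm) = ⇑q '' Set.range (f ∘ ⇑q.symm) :=
      Set.range_comp _ _
    rw [h1, Function.Surjective.range_comp q.symm.surjective f]
  have hdiff : ∀ s : Set Ω, ⇑q '' s \ Set.range (⇑q ∘ f ∘ ⇑q.symm) = ⇑q '' (s \ Set.range f) := by
    intro s
    rw [hrange, ← Set.image_diff q.injective]
  have hfwd : ∀ s : Set Ω,
      IsForwardCycle f s ↔ IsForwardCycle (⇑q ∘ f ∘ ⇑q.symm) (⇑q '' s) := by
    intro s
    unfold IsForwardCycle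
    rw [← hiff, hdiff, Set.image_nonempty, Set.infinite_image_iff q.injective.injOn]
  have hopen : ∀ s : Set Ω,
      IsOpenCycle f s ↔ IsOpenCycle (⇑q ∘ f ∘ ⇑q.symm) (⇑q '' s) := by
    intro s
    unfold IsOpenCycle
    rw [← hiff, hdiff, Set.image_nonempty, Set.infinite_image_iff q.injective.injOn]
  refine ⟨?_, ?_, ?_⟩
  · intro n
    symm
    apply Cardinal.mk_congr
    refine Equiv.subtypeEquiv (Equiv.Set.congr (q : Ω ≃ Ω)) ?_
    intro s
    refine and_congr (hiff s) ?_
    simp only [Equiv.Set.congr_apply]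
    rw [Cardinal.mk_image_eq q.injective]
  · symm
    apply Cardinal.mk_congr
    exact Equiv.subtypeEquiv (Equiv.Set.congr (q : Ω ≃ Ω)) hopen
  · symm
    apply Cardinal.mk_congr
    exact Equiv.subtypeEquiv (Equiv.Set.congr (q : Ω ≃ Ω)) hfwd

end Stmt10Aux

end proof_aux
theorem stmt_10 [Countable Ω] [Infinite Ω] (f g : Ω → Ω)
    (hf : Function.Injective f) (hg : Function.Injective g)
    (h h₁ h₂ : Equiv.Perm Ω) (hh₁ : Finitary h₁) (hh₂ : Finitary h₂)
    (heq : f = ⇑h.symm ∘ ⇑h₂ ∘ g ∘ ⇑h₁ ∘ ⇑h) :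
    FinEquiv f g := by
  classical
  set k : Ω → Ω := ⇑h₂ ∘ g ∘ ⇑h₁ with hkdef
  have hkc : ⇑h ∘ f ∘ ⇑h.symm = k := by
    funext x
    rw [heq]
    simp [hkdef, Function.comp]
  have hconj := Stmt10Aux.conj_counts h f
  rw [hkc] at hconj
  obtain ⟨hcn, hco, hcf⟩ := hconj
  have hkinj : Function.Injective k := h₂.injective.comp (hg.comp h₁.injective)
  have hdiff : {x | k x ≠ g x}.Finite := by
    apply Set.Finite.subset (hh₁.union (hh₂.preimage hg.injOn))
    intro x hx
    by_cases h1 : h₁ x = x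
    · by_cases h2 : h₂ (g x) = g x
      · exfalso
        apply hx
        show h₂ (g (h₁ x)) = g x
        rw [h1, h2]
      · exact Or.inr h2
    · exact Or.inl h1
  obtain ⟨ho, hfw, hbad, hfin⟩ := Stmt10Aux.finEquiv_of_finite_diff hkinj hg hdiff
  refine ⟨hco.symm.trans ho, hcf.symm.trans hfw, ?_, ?_⟩
  · have hset : {n : ℕ | 0 < n ∧ Cn f n ≠ Cn g n} = {n : ℕ | 0 < n ∧ Cn k n ≠ Cn g n} := by
      ext n
      simp only [Set.mem_setOf_eq, hcn n]
    rw [hset]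
    exact hbad
  · intro n hn hne
    have hne' : Cn k n ≠ Cn g n := by
      rw [hcn n]
      exact hne
    obtain ⟨l1, l2⟩ := hfin n hn hne'
    refine ⟨?_, l2⟩
    rw [← hcn n]
    exact l1
end

section
/- Let f ∈ Inj(Ω) be a map that has at least one infinite cycle in its cycle decomposition, and let n ∈ ℤ₊. Then there exists a transposition h ∈ Fin(Ω) such that (fh)C_n = (f)C_n + 1 and (fh)C_m = (f)C_m for all m ∈ ℤ₊ with m ≠ n. -/
open Cardinal Function Set

universe u
variable {Ω : Type u}

namespace Stmt11Aux

variable {Ω : Type u}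

/-- `x` and `y` have a common forward iterate. -/
def R (f : Ω → Ω) (x y : Ω) : Prop := ∃ a b : ℕ, f^[a] x = f^[b] y

/-- The orbit class of `x` under `f`. -/
def cls (f : Ω → Ω) (x : Ω) : Set Ω := {y | R f x y}

lemma R_refl (f : Ω → Ω) (x : Ω) : R f x x := ⟨0, 0, rfl⟩

lemma R_symm {f : Ω → Ω} {x y : Ω} (h : R f x y) : R f y x := by
  obtain ⟨a, b, hab⟩ := h; exact ⟨b, a, hab.symm⟩

lemma R_trans {f : Ω → Ω} {x y z : Ω} (h1 : R f x y) (h2 : R f y z) : R f x z := by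
  obtain ⟨a, b, hab⟩ := h1
  obtain ⟨c, d, hcd⟩ := h2
  refine ⟨c + a, b + d, ?_⟩
  rw [Function.iterate_add_apply, hab, ← Function.iterate_add_apply, Nat.add_comm c b,
    Function.iterate_add_apply, hcd, ← Function.iterate_add_apply]

lemma mem_cls_self (f : Ω → Ω) (x : Ω) : x ∈ cls f x := R_refl f x

lemma it_mem {u : Ω → Ω} {t : Set Ω} (ht : ∀ y, u y ∈ t ↔ y ∈ t) (k : ℕ) (y : Ω) :
    u^[k] y ∈ t ↔ y ∈ t := by
  induction k with
  | zero => exact Iff.rfl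
  | succ k ih => rw [Function.iterate_succ_apply']; exact (ht _).trans ih

lemma mem_cls_apply (f : Ω → Ω) (x : Ω) : ∀ y, f y ∈ cls f x ↔ y ∈ cls f x := by
  intro y
  constructor
  · rintro ⟨a, b, hab⟩
    exact ⟨a, b + 1, by rw [Function.iterate_succ_apply]; exact hab⟩
  · rintro ⟨a, b, hab⟩
    refine ⟨a + 1, b, ?_⟩
    rw [Function.iterate_succ_apply', hab]
    exact (Function.iterate_succ_apply' f b y).symm.trans (Function.iterate_succ_apply f b y)

lemma cls_isCycle (f : Ω → Ω) (x : Ω) : IsCycleUnder f (cls f x) := by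
  refine ⟨⟨x, mem_cls_self f x⟩, mem_cls_apply f x, ?_⟩
  intro t hsub hne ht
  obtain ⟨w, hw⟩ := hne
  apply Set.Subset.antisymm hsub
  intro y hy
  obtain ⟨a, b, hab⟩ := hsub hw
  obtain ⟨c, d, hcd⟩ := hy
  have key : f^[c + b] w = f^[a + d] y := by
    have h1 : f^[c + a] x = f^[c + b] w := by
      rw [Function.iterate_add_apply, Function.iterate_add_apply, hab]
    have h2 : f^[a + c] x = f^[a + d] y := by
      rw [Function.iterate_add_apply, Function.iterate_add_apply, hcd]
    rw [← h1, Nat.add_comm c a, h2]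
  have : f^[a + d] y ∈ t := key ▸ (it_mem ht (c + b) w).mpr hw
  exact (it_mem ht (a + d) y).mp this

lemma eq_cls {f : Ω → Ω} {s : Set Ω} (hs : IsCycleUnder f s) {x : Ω} (hx : x ∈ s) :
    s = cls f x := by
  obtain ⟨hne, hi, hmin⟩ := hs
  have hprop : ∀ y, f y ∈ s ∩ cls f x ↔ y ∈ s ∩ cls f x := by
    intro y
    simp only [Set.mem_inter_iff]
    exact and_congr (hi y) (mem_cls_apply f x y)
  have h1 : s ∩ cls f x = s :=
    hmin _ Set.inter_subset_left ⟨x, hx, mem_cls_self f x⟩ hprop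
  have h2 : s ∩ cls f x = cls f x :=
    (cls_isCycle f x).2.2 _ Set.inter_subset_right ⟨x, hx, mem_cls_self f x⟩ hprop
  rw [← h1, h2]

lemma cls_eq_of_mem {f : Ω → Ω} {x y : Ω} (h : y ∈ cls f x) : cls f y = cls f x := by
  ext w
  exact ⟨fun hw => R_trans h hw, fun hw => R_trans (R_symm h) hw⟩

lemma cls_subset_of_inv {u : Ω → Ω} {U : Set Ω} (hU : ∀ y, u y ∈ U ↔ y ∈ U) {x : Ω}
    (hx : x ∈ U) : cls u x ⊆ U := by
  rintro y ⟨a, b, hab⟩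
  have := (it_mem hU a x).mpr hx
  rw [hab] at this
  exact (it_mem hU b y).mp this

lemma periodic_cls {u : Ω → Ω} (hu : Function.Injective u) {z : Ω} {p : ℕ} (hp : 0 < p)
    (hz : u^[p] z = z) : cls u z = (fun k => u^[k] z) '' Set.Iio p := by
  have tsub : ((fun k => u^[k] z) '' Set.Iio p) ⊆ cls u z := by
    rintro y ⟨k, -, rfl⟩; exact ⟨k, 0, rfl⟩
  have tne : ((fun k => u^[k] z) '' Set.Iio p).Nonempty := ⟨z, 0, hp, rfl⟩
  have ti : ∀ y, u y ∈ ((fun k => u^[k] z) '' Set.Iio p) ↔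
      y ∈ ((fun k => u^[k] z) '' Set.Iio p) := by
    intro y
    constructor
    · rintro ⟨k, hk, hky⟩
      rcases Nat.eq_zero_or_pos k with h0 | hpos
      · subst h0
        have hky' : z = u y := hky
        have he : u (u^[p - 1] z) = u y := by
          calc u (u^[p - 1] z) = u^[(p - 1) + 1] z := (Function.iterate_succ_apply' u _ z).symm
            _ = u^[p] z := by rw [Nat.sub_add_cancel hp]
            _ = u y := hz.trans hky'
        exact ⟨p - 1, Nat.sub_lt hp one_pos, hu he⟩
      · have hky' : u^[k] z = u y := hky
        have he : u (u^[k - 1] z) = u y := by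
          calc u (u^[k - 1] z) = u^[(k - 1) + 1] z := (Function.iterate_succ_apply' u _ z).symm
            _ = u^[k] z := by rw [Nat.sub_add_cancel hpos]
            _ = u y := hky'
        exact ⟨k - 1, lt_of_le_of_lt (Nat.sub_le k 1) hk, hu he⟩
    · rintro ⟨k, hk, rfl⟩
      rcases Nat.lt_or_ge (k + 1) p with h | h
      · refine ⟨k + 1, h, ?_⟩
        show u^[k + 1] z = u (u^[k] z)
        exact Function.iterate_succ_apply' u k z
      · have hkp : k + 1 = p := le_antisymm (Nat.succ_le_of_lt hk) h
        refine ⟨0, hp, ?_⟩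
        show u^[0] z = u (u^[k] z)
        calc u^[0] z = z := rfl
          _ = u^[p] z := hz.symm
          _ = u^[k + 1] z := by rw [hkp]
          _ = u (u^[k] z) := Function.iterate_succ_apply' u k z
  exact ((cls_isCycle u z).2.2 _ tsub tne ti).symm

lemma iterate_distinct {f : Ω → Ω} {x : Ω} (hf : Function.Injective f)
    (hinf : (cls f x).Infinite) : ∀ i j : ℕ, f^[i] x = f^[j] x → i = j := by
  have key : ∀ i j, i < j → f^[i] x = f^[j] x → False := by
    intro i j hij he
    have hz : f^[j - i] (f^[i] x) = f^[i] x := by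
      calc f^[j - i] (f^[i] x) = f^[(j - i) + i] x := (Function.iterate_add_apply f _ _ x).symm
        _ = f^[j] x := by rw [Nat.sub_add_cancel hij.le]
        _ = f^[i] x := he.symm
    have hcz : cls f (f^[i] x) = cls f x := cls_eq_of_mem ⟨i, 0, rfl⟩
    have hfin : (cls f (f^[i] x)).Finite := by
      rw [periodic_cls hf (Nat.sub_pos_of_lt hij) hz]
      exact (Set.finite_Iio _).image _
    rw [hcz] at hfin
    exact hinf hfin
  intro i j he
  rcases Nat.lt_trichotomy i j with h | h | h
  · exact (key i j h he).elim
  · exact h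
  · exact (key j i h he.symm).elim

end Stmt11Aux


theorem stmt_11 [Countable Ω] [Infinite Ω] (f : Ω → Ω) (hf : Function.Injective f)
    (hcy : ∃ s : Set Ω, IsCycleUnder f s ∧ s.Infinite) (n : ℕ) (hn : 0 < n) :
    ∃ h : Equiv.Perm Ω, IsTransposition h ∧
      Cn (⇑h ∘ f) n = Cn f n + 1 ∧
      ∀ m : ℕ, 0 < m → m ≠ n → Cn (⇑h ∘ f) m = Cn f m := by
  classical
  obtain ⟨s, hs, hsinf⟩ := hcy
  obtain ⟨α, hα⟩ := hs.1
  have hsα : s = Stmt11Aux.cls f α := Stmt11Aux.eq_cls hs hα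
  set S := Stmt11Aux.cls f α with hSdef
  have hSinf : S.Infinite := hsα ▸ hsinf
  have hd : ∀ i j : ℕ, f^[i] α = f^[j] α → i = j := Stmt11Aux.iterate_distinct hf hSinf
  set β := f^[n] α with hβ
  have hαβ : α ≠ β := fun e => Nat.ne_of_lt hn (hd 0 n (e.trans hβ))
  have hαS : α ∈ S := Stmt11Aux.mem_cls_self f α
  have hβS : β ∈ S := ⟨n, 0, hβ.symm⟩
  have hfS : ∀ y, f y ∈ S ↔ y ∈ S := Stmt11Aux.mem_cls_apply f α
  set g := ⇑(Equiv.swap α β) ∘ f with hgdef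
  have ginj : Function.Injective g := (Equiv.swap α β).injective.comp hf
  have hgT : ∀ y, y ∉ S → g y = f y := by
    intro y hy
    have h1 : f y ∉ S := fun h => hy ((hfS y).mp h)
    exact Equiv.swap_apply_of_ne_of_ne (fun e => h1 (by rw [e]; exact hαS))
      (fun e => h1 (by rw [e]; exact hβS))
  have hgS : ∀ y, g y ∈ S ↔ y ∈ S := by
    intro y
    constructor
    · intro hgy
      by_contra hy
      rw [hgT y hy] at hgy
      exact hy ((hfS y).mp hgy)
    · intro hy
      have hfy : f y ∈ S := (hfS y).mpr hy
      show Equiv.swap α β (f y) ∈ S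
      by_cases e1 : f y = α
      · rw [e1, Equiv.swap_apply_left]; exact hβS
      by_cases e2 : f y = β
      · rw [e2, Equiv.swap_apply_right]; exact hαS
      · rw [Equiv.swap_apply_of_ne_of_ne e1 e2]; exact hfy
  have claim1 : ∀ k, k < n → g^[k] α = f^[k] α := by
    intro k hk
    induction k with
    | zero => rfl
    | succ k ih =>
      have hk' : k < n := Nat.lt_of_succ_lt hk
      rw [Function.iterate_succ_apply' g, ih hk']
      show Equiv.swap α β (f (f^[k] α)) = f^[k + 1] α
      have e1 : f (f^[k] α) = f^[k + 1] α := (Function.iterate_succ_apply' f k α).symm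
      rw [e1]
      refine Equiv.swap_apply_of_ne_of_ne ?_ ?_
      · intro e
        exact Nat.succ_ne_zero k (hd (k + 1) 0 e)
      · intro e
        exact Nat.ne_of_lt hk (hd (k + 1) n (e.trans hβ))
  have claim2 : g^[n] α = α := by
    have e : n - 1 + 1 = n := Nat.succ_pred_eq_of_pos hn
    calc g^[n] α = g^[n - 1 + 1] α := by rw [e]
      _ = g (g^[n - 1] α) := Function.iterate_succ_apply' g _ α
      _ = Equiv.swap α β (f (f^[n - 1] α)) := by rw [claim1 (n - 1) (by omega)]; rfl
      _ = Equiv.swap α β (f^[n] α) := by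
          have e2 : f (f^[n - 1] α) = f^[n - 1 + 1] α :=
            (Function.iterate_succ_apply' f (n - 1) α).symm
          rw [e2, e]
      _ = α := by rw [← hβ, Equiv.swap_apply_right]
  set C := Stmt11Aux.cls g α with hCdef
  have hC : C = (fun k => f^[k] α) '' Set.Iio n := by
    rw [hCdef, Stmt11Aux.periodic_cls ginj hn claim2]
    exact Set.image_congr fun k hk => claim1 k hk
  have hCS : C ⊆ S := by
    rw [hC]
    rintro y ⟨k, -, rfl⟩
    exact ⟨k, 0, rfl⟩
  have hCfin : C.Finite := by
    rw [hC]; exact (Set.finite_Iio n).image _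
  have hCcard : Cardinal.mk ↥C = (n : Cardinal) := by
    have e : Fin n ≃ ↥C := by
      refine Equiv.ofBijective (fun k => ⟨f^[(k : ℕ)] α, by rw [hC]; exact ⟨(k : ℕ), k.2, rfl⟩⟩)
        ⟨?_, ?_⟩
      · intro k l hkl
        exact Fin.ext (hd k l (congrArg Subtype.val hkl))
      · rintro ⟨y, hy⟩
        rw [hC] at hy
        obtain ⟨k, hk, rfl⟩ := hy
        exact ⟨⟨k, hk⟩, rfl⟩
    exact Cardinal.mk_eq_nat_iff.mpr ⟨e.symm⟩
  have hβC : β ∉ C := by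
    rw [hC]
    rintro ⟨k, hk, hkβ⟩
    have hk' : k < n := hk
    have := hd k n (hkβ.trans hβ)
    omega
  have hgβ : ∀ m : ℕ, g^[m] β = f^[n + m] α := by
    intro m
    induction m with
    | zero => simp [hβ]
    | succ m ih =>
      rw [Function.iterate_succ_apply' g, ih]
      show Equiv.swap α β (f (f^[n + m] α)) = f^[n + (m + 1)] α
      have e4 : n + (m + 1) = n + m + 1 := by omega
      rw [e4]
      have e1 : f (f^[n + m] α) = f^[n + m + 1] α := (Function.iterate_succ_apply' f _ α).symm
      rw [e1]
      have h1 : f^[n + m + 1] α ≠ α := fun e => by have := hd (n + m + 1) 0 e; omega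
      have h2 : f^[n + m + 1] α ≠ β := fun e => by have := hd (n + m + 1) n (e.trans hβ); omega
      rw [Equiv.swap_apply_of_ne_of_ne h1 h2]
  set D := Stmt11Aux.cls g β with hDdef
  have hDS : D ⊆ S := Stmt11Aux.cls_subset_of_inv hgS hβS
  have hDsub : D ⊆ S \ C := by
    intro y hy
    refine ⟨hDS hy, fun hyC => ?_⟩
    have h1 : Stmt11Aux.cls g y = D := Stmt11Aux.cls_eq_of_mem hy
    have h2 : Stmt11Aux.cls g y = C := Stmt11Aux.cls_eq_of_mem hyC
    apply hβC
    rw [← h2, h1]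
    exact Stmt11Aux.mem_cls_self g β
  have hsubD : S \ C ⊆ D := by
    rintro x ⟨hxS, hxC⟩
    obtain ⟨a, b, hab⟩ := hxS
    rcases le_or_gt b a with hba | hba
    · have hx : f^[a - b] α = x := by
        have h1 : f^[b] (f^[a - b] α) = f^[b] x := by
          rw [← Function.iterate_add_apply, Nat.add_sub_cancel' hba]; exact hab
        exact hf.iterate b h1
      have hk : ¬ a - b < n := by
        intro hlt
        exact hxC (by rw [hC]; exact ⟨a - b, hlt, hx⟩)
      refine ⟨a - b - n, 0, ?_⟩
      show g^[a - b - n] β = g^[0] x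
      rw [hgβ, Nat.add_sub_cancel' (Nat.le_of_not_lt hk)]
      exact hx
    · have hp : 0 < b - a := Nat.sub_pos_of_lt hba
      have hpx : f^[b - a] x = α := by
        have h1 : f^[a] (f^[b - a] x) = f^[a] α := by
          rw [← Function.iterate_add_apply, Nat.add_sub_cancel' hba.le]; exact hab.symm
        exact hf.iterate a h1
      have hdx : ∀ i j : ℕ, f^[i] x = f^[j] x → i = j := by
        apply Stmt11Aux.iterate_distinct hf
        have hcx : Stmt11Aux.cls f x = S := Stmt11Aux.cls_eq_of_mem ⟨a, b, hab⟩
        rw [hcx]; exact hSinf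
      have claimx : ∀ j, j < b - a → g^[j] x = f^[j] x := by
        intro j hj
        induction j with
        | zero => rfl
        | succ j ih =>
          have hj' : j < b - a := Nat.lt_of_succ_lt hj
          rw [Function.iterate_succ_apply' g, ih hj']
          show Equiv.swap α β (f (f^[j] x)) = f^[j + 1] x
          have e1 : f (f^[j] x) = f^[j + 1] x := (Function.iterate_succ_apply' f j x).symm
          rw [e1]
          refine Equiv.swap_apply_of_ne_of_ne ?_ ?_
          · intro e
            have := hdx (j + 1) (b - a) (e.trans hpx.symm)
            omega
          · intro e
            have e2 : f^[j + 1] x = f^[n + (b - a)] x := by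
              rw [e, hβ, ← hpx, ← Function.iterate_add_apply]
            have := hdx (j + 1) (n + (b - a)) e2
            omega
      have hgp : g^[b - a] x = β := by
        have e : b - a = b - a - 1 + 1 := (Nat.succ_pred_eq_of_pos hp).symm
        rw [e, Function.iterate_succ_apply' g, claimx _ (by omega)]
        show Equiv.swap α β (f (f^[b - a - 1] x)) = β
        have e1 : f (f^[b - a - 1] x) = f^[b - a - 1 + 1] x :=
          (Function.iterate_succ_apply' f _ x).symm
        rw [e1, ← e, hpx, Equiv.swap_apply_left]
      exact ⟨0, b - a, hgp.symm⟩
  have hD : D = S \ C := Set.Subset.antisymm hDsub hsubD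
  have hDinf : D.Infinite := by rw [hD]; exact hSinf.diff hCfin
  have claimA : ∀ x, x ∉ S → Stmt11Aux.cls f x = Stmt11Aux.cls g x := by
    intro x hx
    have hfc : ∀ y, f y ∈ Sᶜ ↔ y ∈ Sᶜ := fun y => not_iff_not.mpr (hfS y)
    have hgc : ∀ y, g y ∈ Sᶜ ↔ y ∈ Sᶜ := fun y => not_iff_not.mpr (hgS y)
    have hsub1 : Stmt11Aux.cls f x ⊆ Sᶜ := Stmt11Aux.cls_subset_of_inv hfc hx
    have hsub2 : Stmt11Aux.cls g x ⊆ Sᶜ := Stmt11Aux.cls_subset_of_inv hgc hx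
    have hiter : ∀ (y : Ω), y ∉ S → ∀ k : ℕ, g^[k] y = f^[k] y ∧ f^[k] y ∉ S := by
      intro y hy k
      induction k with
      | zero => exact ⟨rfl, hy⟩
      | succ k ih =>
        constructor
        · rw [Function.iterate_succ_apply' g, ih.1, hgT _ ih.2, Function.iterate_succ_apply' f]
        · rw [Function.iterate_succ_apply' f]
          exact fun h => ih.2 ((hfS _).mp h)
    ext y
    constructor
    · intro hy
      have hyT : y ∉ S := hsub1 hy
      obtain ⟨c, d, hcd⟩ := hy
      exact ⟨c, d, by rw [(hiter x hx c).1, (hiter y hyT d).1]; exact hcd⟩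
    · intro hy
      have hyT : y ∉ S := hsub2 hy
      obtain ⟨c, d, hcd⟩ := hy
      exact ⟨c, d, by rw [← (hiter x hx c).1, ← (hiter y hyT d).1]; exact hcd⟩
  have cnEq : ∀ (u : Ω → Ω) (m : ℕ),
      Cn u m = Cardinal.mk ↥{t : Set Ω | IsCycleUnder u t ∧ Cardinal.mk ↥t = (m : Cardinal)} :=
    fun u m => rfl
  have hclsS : ∀ x, x ∈ S → Stmt11Aux.cls f x = S := fun x hx => Stmt11Aux.cls_eq_of_mem hx
  have hginC : ∀ x, x ∈ C → Stmt11Aux.cls g x = C := fun x hx => Stmt11Aux.cls_eq_of_mem hx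
  have hginD : ∀ x, x ∈ D → Stmt11Aux.cls g x = D := fun x hx => Stmt11Aux.cls_eq_of_mem hx
  have hInfNe : ∀ T : Set Ω, T.Infinite → ∀ m : ℕ, Cardinal.mk ↥T ≠ (m : Cardinal) := by
    intro T hT m he
    have h1 : ℵ₀ ≤ Cardinal.mk ↥T := Cardinal.infinite_iff.mp hT.to_subtype
    rw [he] at h1
    exact (Cardinal.nat_lt_aleph0 m).not_ge h1
  have keyset : ∀ m : ℕ, m ≠ n →
      {t : Set Ω | IsCycleUnder g t ∧ Cardinal.mk ↥t = (m : Cardinal)} =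
      {t : Set Ω | IsCycleUnder f t ∧ Cardinal.mk ↥t = (m : Cardinal)} := by
    intro m hm
    ext t
    simp only [Set.mem_setOf_eq]
    constructor
    · rintro ⟨htc, htm⟩
      obtain ⟨x, hx⟩ := htc.1
      have htx : t = Stmt11Aux.cls g x := Stmt11Aux.eq_cls htc hx
      by_cases hxS : x ∈ S
      · by_cases hxC : x ∈ C
        · exfalso
          rw [htx, hginC x hxC] at htm
          exact hm (Nat.cast_injective (htm.symm.trans hCcard))
        · exfalso
          have hxD : x ∈ D := hsubD ⟨hxS, hxC⟩
          rw [htx, hginD x hxD] at htm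
          exact hInfNe D hDinf m htm
      · refine ⟨?_, htm⟩
        have h2 : t = Stmt11Aux.cls f x := htx.trans (claimA x hxS).symm
        rw [h2]
        exact Stmt11Aux.cls_isCycle f x
    · rintro ⟨htc, htm⟩
      obtain ⟨x, hx⟩ := htc.1
      have htx : t = Stmt11Aux.cls f x := Stmt11Aux.eq_cls htc hx
      by_cases hxS : x ∈ S
      · exfalso
        rw [htx, hclsS x hxS] at htm
        exact hInfNe S hSinf m htm
      · refine ⟨?_, htm⟩
        have h2 : t = Stmt11Aux.cls g x := htx.trans (claimA x hxS)
        rw [h2]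
        exact Stmt11Aux.cls_isCycle g x
  have keyn : {t : Set Ω | IsCycleUnder g t ∧ Cardinal.mk ↥t = (n : Cardinal)} =
      insert C {t : Set Ω | IsCycleUnder f t ∧ Cardinal.mk ↥t = (n : Cardinal)} := by
    ext t
    simp only [Set.mem_setOf_eq, Set.mem_insert_iff]
    constructor
    · rintro ⟨htc, htm⟩
      obtain ⟨x, hx⟩ := htc.1
      have htx : t = Stmt11Aux.cls g x := Stmt11Aux.eq_cls htc hx
      by_cases hxS : x ∈ S
      · by_cases hxC : x ∈ C
        · exact Or.inl (htx.trans (hginC x hxC))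
        · exfalso
          have hxD : x ∈ D := hsubD ⟨hxS, hxC⟩
          rw [htx, hginD x hxD] at htm
          exact hInfNe D hDinf n htm
      · refine Or.inr ⟨?_, htm⟩
        have h2 : t = Stmt11Aux.cls f x := htx.trans (claimA x hxS).symm
        rw [h2]
        exact Stmt11Aux.cls_isCycle f x
    · rintro (rfl | ⟨htc, htm⟩)
      · refine ⟨?_, hCcard⟩
        rw [hCdef]
        exact Stmt11Aux.cls_isCycle g α
      · obtain ⟨x, hx⟩ := htc.1
        have htx : t = Stmt11Aux.cls f x := Stmt11Aux.eq_cls htc hx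
        by_cases hxS : x ∈ S
        · exfalso
          rw [htx, hclsS x hxS] at htm
          exact hInfNe S hSinf n htm
        · refine ⟨?_, htm⟩
          have h2 : t = Stmt11Aux.cls g x := htx.trans (claimA x hxS)
          rw [h2]
          exact Stmt11Aux.cls_isCycle g x
  have hCnot : C ∉ {t : Set Ω | IsCycleUnder f t ∧ Cardinal.mk ↥t = (n : Cardinal)} := by
    rintro ⟨htc, htm⟩
    obtain ⟨x, hx⟩ := htc.1
    have h1 : C = Stmt11Aux.cls f x := Stmt11Aux.eq_cls htc hx
    have h2 : Stmt11Aux.cls f x = S := hclsS x (hCS hx)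
    rw [h1.trans h2] at htm
    exact hInfNe S hSinf n htm
  refine ⟨Equiv.swap α β, ⟨α, β, hαβ, Equiv.swap_apply_left α β, Equiv.swap_apply_right α β,
    fun z h1 h2 => Equiv.swap_apply_of_ne_of_ne h1 h2⟩, ?_, ?_⟩
  · rw [← hgdef, cnEq g n, keyn, Cardinal.mk_insert hCnot, ← cnEq f n]
  · intro m hm hmn
    rw [← hgdef, cnEq g m, keyset m hmn, ← cnEq f m]
end
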